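/- arXiv:2510.19711 — 6 statements merged into one kernel-verified Lean document; each statement's English description precedes it below -/
import Mathlib

section
/- Let (X,T) be a topological dynamical system, μ a T-invariant Borel probability measure, ξ on the unit circle, and x ∈ X a generic point for μ. Suppose there exists a continuous f₀: X → ℂ and a strictly increasing sequence (n_k) such that (1/n_k) ∑_{j=0}^{n_k-1} ξ^{-j} f₀(T^j x) converges to some γ ≠ 0. Then ξ is an eigenvalue of the Koopman operator U_T on L²(X,μ), i.e., there exists a nonzero e ∈ L²(X,μ) with e∘T = ξ·e μ-almost everywhere. -/
/-!
Along an ultrafilter finer than the subsequence `(n_k)`, the twisted averages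
`f ↦ n⁻¹ ∑_{j<n} ξ⁻ʲ f (Tʲ x)` converge to a linear functional `Φ` on `C(X, ℂ)` with
`Φ (f ∘ T) = ξ Φ f` (the averages of `f ∘ T` and `ξ f` differ by a telescoping `O(1/n)` term) and
`Φ f₀ = γ`. By Cauchy–Schwarz and genericity, `|Φ f|² ≤ ∫ |f|² dμ`, so `Φ` extends to a bounded
functional on `L²(μ)`, represented by a vector `e`. Then `⟪e, U_T e⟫ = ξ ‖e‖²`, and since `U_T`
is an isometry and `|ξ| = 1`, the equality case of Cauchy–Schwarz gives `U_T e = ξ e`; finally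
`e ≠ 0` because `⟪e, f₀⟫ = γ ≠ 0`.
-/

open Filter Finset MeasureTheory

open Topology

section TwistedBirkhoffAverage

variable {X : Type*} (T : X → X) (ξ : ℂ) (x : X)

noncomputable def twistedBirkhoffAverage (n : ℕ) : (X → ℂ) →ₗ[ℂ] ℂ where
  toFun f := (n : ℂ)⁻¹ * ∑ j ∈ range n, ξ ^ (-(j : ℤ)) * f (T^[j] x)
  map_add' f g := by simp only [Pi.add_apply, mul_add, sum_add_distrib]
  map_smul' c f := by
    simp only [Pi.smul_apply, smul_eq_mul, RingHom.id_apply, mul_sum]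
    exact sum_congr rfl fun j _ => by ring

theorem twistedBirkhoffAverage_apply (n : ℕ) (f : X → ℂ) :
    twistedBirkhoffAverage T ξ x n f =
      (n : ℂ)⁻¹ * ∑ j ∈ range n, ξ ^ (-(j : ℤ)) * f (T^[j] x) :=
  rfl

variable {T ξ x}

theorem norm_twistedBirkhoffAverage_le (hξ : ‖ξ‖ = 1) (n : ℕ) (f : X → ℂ) :
    ‖twistedBirkhoffAverage T ξ x n f‖ ≤ (n : ℝ)⁻¹ * ∑ j ∈ range n, ‖f (T^[j] x)‖ := by
  rw [twistedBirkhoffAverage_apply, norm_mul, norm_inv, Complex.norm_natCast]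
  gcongr
  refine (norm_sum_le _ _).trans_eq (sum_congr rfl fun j _ => ?_)
  rw [norm_mul, norm_zpow, hξ, one_zpow, one_mul]

theorem norm_twistedBirkhoffAverage_le_of_forall_le (hξ : ‖ξ‖ = 1) {f : X → ℂ} {C : ℝ}
    (hC : 0 ≤ C) (hf : ∀ y, ‖f y‖ ≤ C) (n : ℕ) : ‖twistedBirkhoffAverage T ξ x n f‖ ≤ C := by
  calc ‖twistedBirkhoffAverage T ξ x n f‖ ≤ (n : ℝ)⁻¹ * ∑ j ∈ range n, ‖f (T^[j] x)‖ :=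
        norm_twistedBirkhoffAverage_le hξ n f
    _ ≤ (n : ℝ)⁻¹ * (n * C) := by
        gcongr
        simpa using sum_le_card_nsmul (range n) _ C fun j _ => hf _
    _ ≤ C := by
        rcases eq_or_ne n 0 with rfl | hn
        · simpa using hC
        · rw [inv_mul_cancel_left₀ (Nat.cast_ne_zero.2 hn)]

theorem norm_twistedBirkhoffAverage_sq_le (hξ : ‖ξ‖ = 1) (n : ℕ) (f : X → ℂ) :
    ‖twistedBirkhoffAverage T ξ x n f‖ ^ 2 ≤ (n : ℝ)⁻¹ * ∑ j ∈ range n, ‖f (T^[j] x)‖ ^ 2 := by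
  calc ‖twistedBirkhoffAverage T ξ x n f‖ ^ 2
      ≤ ((∑ j ∈ range n, ‖f (T^[j] x)‖) / #(range n)) ^ 2 := by
        rw [card_range, div_eq_inv_mul]
        gcongr
        exact norm_twistedBirkhoffAverage_le hξ n f
    _ ≤ (∑ j ∈ range n, ‖f (T^[j] x)‖ ^ 2) / #(range n) := sum_div_card_sq_le_sum_sq_div_card
    _ = _ := by rw [card_range, div_eq_inv_mul]

theorem twistedBirkhoffAverage_comp_sub (hξ : ξ ≠ 0) (n : ℕ) (f : X → ℂ) :
    twistedBirkhoffAverage T ξ x n (f ∘ T) - ξ * twistedBirkhoffAverage T ξ x n f =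
      (n : ℂ)⁻¹ * (ξ * (ξ ^ (-(n : ℤ)) * f (T^[n] x) - f x)) := by
  set g : ℕ → ℂ := fun j => ξ ^ (-(j : ℤ)) * f (T^[j] x)
  have hterm : ∀ j : ℕ, ξ ^ (-(j : ℤ)) * (f ∘ T) (T^[j] x) - ξ * g j = ξ * (g (j + 1) - g j) := by
    intro j
    have : ξ ^ (-(j : ℤ)) = ξ * ξ ^ (-((j + 1 : ℕ) : ℤ)) := by
      rw [← zpow_one_add₀ hξ]
      push_cast
      ring_nf
    simp only [g, Function.comp_apply, ← Function.iterate_succ_apply' T, this]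
    ring
  rw [twistedBirkhoffAverage_apply, twistedBirkhoffAverage_apply, mul_left_comm, ← mul_sub,
    mul_sum, ← sum_sub_distrib, sum_congr rfl fun j _ => hterm j, ← mul_sum, sum_range_sub]
  simp [g]

theorem tendsto_twistedBirkhoffAverage_comp_sub (hξ : ‖ξ‖ = 1) {f : X → ℂ} {C : ℝ}
    (hf : ∀ y, ‖f y‖ ≤ C) :
    Tendsto (fun n => twistedBirkhoffAverage T ξ x n (f ∘ T) -
      ξ * twistedBirkhoffAverage T ξ x n f) atTop (𝓝 0) := by
  have hξ0 : ξ ≠ 0 := norm_ne_zero_iff.1 (by rw [hξ]; exact one_ne_zero)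
  have hbound : ∀ n : ℕ, ‖(n : ℂ)⁻¹ * (ξ * (ξ ^ (-(n : ℤ)) * f (T^[n] x) - f x))‖ ≤
      (n : ℝ)⁻¹ * (2 * C) := by
    intro n
    rw [norm_mul, norm_inv, Complex.norm_natCast, norm_mul, hξ, one_mul]
    gcongr
    refine (norm_sub_le _ _).trans ?_
    rw [norm_mul, norm_zpow, hξ, one_zpow, one_mul, two_mul]
    exact add_le_add (hf _) (hf _)
  simp only [twistedBirkhoffAverage_comp_sub hξ0]
  refine squeeze_zero_norm hbound ?_
  simpa using tendsto_inv_atTop_nhds_zero_nat.mul_const (2 * C)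

end TwistedBirkhoffAverage

theorem exists_linearMap_tendsto_of_forall_bounded {ι 𝕜 M F : Type*} [NormedField 𝕜]
    [AddCommGroup M] [Module 𝕜 M] [NormedAddCommGroup F] [NormedSpace 𝕜 F] [ProperSpace F]
    (U : Ultrafilter ι) (g : ι → M →ₗ[𝕜] F) (hg : ∀ m, ∃ C, ∀ i, ‖g i m‖ ≤ C) :
    ∃ Φ : M →ₗ[𝕜] F, ∀ m, Tendsto (fun i => g i m) U (𝓝 (Φ m)) := by
  have hlim : ∀ m, ∃ c, Tendsto (fun i => g i m) U (𝓝 c) := by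
    intro m
    obtain ⟨C, hC⟩ := hg m
    have hball : (Ultrafilter.map (fun i => g i m) U : Filter F) ≤ 𝓟 (Metric.closedBall 0 C) :=
      le_principal_iff.2 <| mem_map.2 <| univ_mem' fun i => mem_closedBall_zero_iff.2 (hC i)
    obtain ⟨c, -, hc⟩ := (isCompact_closedBall (0 : F) C).ultrafilter_le_nhds _ hball
    exact ⟨c, hc⟩
  choose Φ hΦ using hlim
  exact ⟨linearMapOfTendsto Φ g (tendsto_pi_nhds.2 hΦ), hΦ⟩

theorem LinearIsometry.apply_eq_smul_of_inner_apply_eq {𝕜 H : Type*} [RCLike 𝕜]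
    [NormedAddCommGroup H] [InnerProductSpace 𝕜 H] (K : H →ₗᵢ[𝕜] H) {ξ : 𝕜} (hξ : ‖ξ‖ = 1)
    {e : H} (h : inner 𝕜 e (K e) = ξ * inner 𝕜 e e) : K e = ξ • e := by
  have hre : RCLike.re (inner 𝕜 (K e) (ξ • e)) = ‖e‖ ^ 2 := by
    rw [inner_smul_right, ← inner_conj_symm, h, inner_self_eq_norm_sq_to_K (𝕜 := 𝕜)]
    simp only [map_mul, map_pow, RCLike.conj_ofReal]
    rw [← mul_assoc, RCLike.mul_conj, hξ]
    simp
  -- `‖K e - ξ • e‖² = ‖e‖² - 2 Re ⟪K e, ξ • e⟫ + ‖e‖² = 0`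
  rw [← sub_eq_zero, ← norm_eq_zero, ← sq_eq_zero_iff, norm_sub_sq (𝕜 := 𝕜), hre, norm_smul, hξ,
    K.norm_map]
  ring

section CompactSpace

variable {X : Type*} [TopologicalSpace X] [CompactSpace X]

theorem exists_linearMap_tendsto_twistedBirkhoffAverage (T : C(X, X)) {ξ : ℂ} (hξ : ‖ξ‖ = 1)
    (x : X) (U : Ultrafilter ℕ) (hU : (U : Filter ℕ) ≤ atTop) :
    ∃ Φ : C(X, ℂ) →ₗ[ℂ] ℂ,
      (∀ f : C(X, ℂ), Tendsto (fun n => twistedBirkhoffAverage T ξ x n f) U (𝓝 (Φ f))) ∧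
      ∀ f : C(X, ℂ), Φ (f.comp T) = ξ * Φ f := by
  obtain ⟨Φ, hΦ⟩ := exists_linearMap_tendsto_of_forall_bounded U
    (fun n => (twistedBirkhoffAverage T ξ x n).comp (ContinuousMap.coeFnLinearMap ℂ))
    fun f => ⟨‖f‖, norm_twistedBirkhoffAverage_le_of_forall_le hξ (norm_nonneg f)
      f.norm_coe_le_norm⟩
  refine ⟨Φ, hΦ, fun f => sub_eq_zero.1 (tendsto_nhds_unique ((hΦ _).sub ((hΦ f).const_mul ξ)) ?_)⟩
  exact (tendsto_twistedBirkhoffAverage_comp_sub hξ f.norm_coe_le_norm).mono_left hU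

variable [MeasurableSpace X] [BorelSpace X]

theorem tendsto_average_norm_sq_of_generic (μ : Measure X) [IsFiniteMeasure μ] {T : X → X}
    {x : X}
    (hgen : ∀ f : C(X, ℂ),
      Tendsto (fun n : ℕ => (n : ℂ)⁻¹ * ∑ j ∈ range n, f (T^[j] x)) atTop (𝓝 (∫ y, f y ∂μ)))
    (f : C(X, ℂ)) :
    Tendsto (fun n : ℕ => (n : ℝ)⁻¹ * ∑ j ∈ range n, ‖f (T^[j] x)‖ ^ 2) atTop
      (𝓝 (‖ContinuousMap.toLp 2 μ ℂ f‖ ^ 2)) := by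
  have h := hgen (f * star f)
  have hint : ∫ y, (f * star f) y ∂μ = ((‖ContinuousMap.toLp 2 μ ℂ f‖ ^ 2 : ℝ) : ℂ) := by
    calc ∫ y, (f * star f) y ∂μ
        = inner ℂ (ContinuousMap.toLp 2 μ ℂ f) (ContinuousMap.toLp 2 μ ℂ f) := by
          rw [ContinuousMap.inner_toLp]
          simp
      _ = _ := by
          rw [inner_self_eq_norm_sq_to_K]
          norm_cast
  rw [hint] at h
  rw [← tendsto_ofReal_iff]
  convert h using 3 with n
  push_cast
  congr 2 with j
  simp [Complex.mul_conj, Complex.normSq_eq_norm_sq]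

theorem norm_le_norm_toLp_of_tendsto_twistedBirkhoffAverage (μ : Measure X) [IsFiniteMeasure μ]
    {T : X → X} {x : X}
    (hgen : ∀ f : C(X, ℂ),
      Tendsto (fun n : ℕ => (n : ℂ)⁻¹ * ∑ j ∈ range n, f (T^[j] x)) atTop (𝓝 (∫ y, f y ∂μ)))
    {ξ : ℂ} (hξ : ‖ξ‖ = 1) {l : Filter ℕ} [l.NeBot] (hl : l ≤ atTop) {f : C(X, ℂ)} {c : ℂ}
    (hc : Tendsto (fun n => twistedBirkhoffAverage T ξ x n f) l (𝓝 c)) :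
    ‖c‖ ≤ ‖ContinuousMap.toLp 2 μ ℂ f‖ := by
  have hsq : ‖c‖ ^ 2 ≤ ‖ContinuousMap.toLp 2 μ ℂ f‖ ^ 2 :=
    le_of_tendsto_of_tendsto' (hc.norm.pow 2)
      ((tendsto_average_norm_sq_of_generic μ hgen f).mono_left hl)
      fun n => norm_twistedBirkhoffAverage_sq_le hξ n f
  exact (pow_le_pow_iff_left₀ (norm_nonneg _) (norm_nonneg _) two_ne_zero).1 hsq

theorem ContinuousMap.compMeasurePreserving_toLp {𝕜 E : Type*} [NormedRing 𝕜]
    [NormedAddCommGroup E] [Module 𝕜 E] [IsBoundedSMul 𝕜 E] [SecondCountableTopologyEither X E]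
    {p : ENNReal} [Fact (1 ≤ p)]
    {μ : Measure X} [IsFiniteMeasure μ] (T : C(X, X)) (hT : MeasurePreserving T μ μ)
    (f : C(X, E)) :
    Lp.compMeasurePreserving T hT (toLp p μ 𝕜 f) = toLp p μ 𝕜 (f.comp T) := by
  refine Lp.ext ?_
  filter_upwards [Lp.coeFn_compMeasurePreserving (toLp p μ 𝕜 f) hT,
    hT.quasiMeasurePreserving.ae_eq_comp (coeFn_toLp (p := p) (𝕜 := 𝕜) μ f),
    coeFn_toLp (p := p) (𝕜 := 𝕜) μ (f.comp T)] with y h₁ h₂ h₃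
  exact h₁.trans (h₂.trans h₃.symm)

theorem Lp.compMeasurePreserving_toDual_symm_eq_smul [NormalSpace X] {μ : Measure X}
    [IsFiniteMeasure μ] [μ.WeaklyRegular] (T : C(X, X)) (hT : MeasurePreserving T μ μ) {ξ : ℂ}
    (hξ : ‖ξ‖ = 1)
    (ψ : StrongDual ℂ (Lp ℂ 2 μ))
    (hψ : ∀ f : C(X, ℂ), ψ (ContinuousMap.toLp 2 μ ℂ (f.comp T)) =
      ξ * ψ (ContinuousMap.toLp 2 μ ℂ f)) :
    Lp.compMeasurePreserving T hT ((InnerProductSpace.toDual ℂ (Lp ℂ 2 μ)).symm ψ) =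
      ξ • (InnerProductSpace.toDual ℂ (Lp ℂ 2 μ)).symm ψ := by
  set K := Lp.compMeasurePreservingₗᵢ ℂ T hT (E := ℂ) (p := 2)
  have hψK : ⇑(ψ.comp K.toContinuousLinearMap) = ⇑(ξ • ψ) := by
    refine (ContinuousMap.toLp_denseRange ℂ μ ℂ (p := 2) ENNReal.ofNat_ne_top).equalizer
      (ψ.comp K.toContinuousLinearMap).continuous (ξ • ψ).continuous (funext fun f => ?_)
    change ψ (Lp.compMeasurePreserving T hT _) = _
    rw [ContinuousMap.compMeasurePreserving_toLp (𝕜 := ℂ) T hT f, hψ]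
    rfl
  refine K.apply_eq_smul_of_inner_apply_eq hξ ?_
  rw [InnerProductSpace.toDual_symm_apply, InnerProductSpace.toDual_symm_apply]
  exact congrFun hψK _

end CompactSpace

theorem Lp.comp_ae_eq_smul_of_compMeasurePreserving_eq_smul {X 𝕜 E : Type*} [MeasurableSpace X]
    [NormedRing 𝕜] [NormedAddCommGroup E] [Module 𝕜 E] [IsBoundedSMul 𝕜 E] {p : ENNReal}
    {μ : Measure X} {T : X → X} (hT : MeasurePreserving T μ μ) {e : Lp E p μ} {ξ : 𝕜}
    (he : Lp.compMeasurePreserving T hT e = ξ • e) :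
    (fun y => e (T y)) =ᵐ[μ] fun y => ξ • e y := by
  have hae : ⇑(Lp.compMeasurePreserving T hT e) =ᵐ[μ] ⇑(ξ • e) := by rw [he]
  filter_upwards [Lp.coeFn_compMeasurePreserving e hT, Lp.coeFn_smul ξ e, hae] with y h₁ h₂ h₃
  rw [← Function.comp_apply (f := ⇑e), ← h₁, h₃, h₂, Pi.smul_apply]

/-- if some twisted Birkhoff average of a generic point has a nonzero
subsequential limit, then `ξ` is an eigenvalue of the Koopman operator. -/
theorem stmt3 {X : Type*} [MetricSpace X] [CompactSpace X]
    [MeasurableSpace X] [BorelSpace X]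
    (T : X ≃ₜ X)
    (μ : Measure X) [IsProbabilityMeasure μ] (hμ : Measure.map (⇑T) μ = μ)
    (ξ : ℂ) (hξ : ‖ξ‖ = 1) (x : X)
    (hgen : ∀ f : C(X, ℂ),
      Tendsto (fun n : ℕ => (n : ℂ)⁻¹ * ∑ j ∈ Finset.range n, f ((⇑T)^[j] x)) atTop
        (nhds (∫ y, f y ∂μ)))
    (f₀ : C(X, ℂ)) (nk : ℕ → ℕ) (hnk : StrictMono nk) (γ : ℂ) (hγ : γ ≠ 0)
    (hconv : Tendsto
      (fun k : ℕ => ((nk k : ℂ))⁻¹ * ∑ j ∈ Finset.range (nk k), ξ ^ (-(j : ℤ)) * f₀ ((⇑T)^[j] x))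
      atTop (nhds γ)) :
    ∃ e : X → ℂ, MemLp e 2 μ ∧ ¬ (e =ᵐ[μ] 0) ∧
      (fun y => e (T y)) =ᵐ[μ] (fun y => ξ * e y) := by
  let U := Ultrafilter.of (map nk atTop)
  have hU : (U : Filter ℕ) ≤ atTop := (Ultrafilter.of_le _).trans hnk.tendsto_atTop
  obtain ⟨Φ, hΦ, hΦT⟩ := exists_linearMap_tendsto_twistedBirkhoffAverage (T : C(X, X)) hξ x U hU
  have hΦf₀ : Φ f₀ = γ :=
    tendsto_nhds_unique (hΦ f₀) ((tendsto_map'_iff.2 hconv).mono_left (Ultrafilter.of_le _))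
  have hΦL2 : ∀ f, ‖Φ f‖ ≤ 1 * ‖ContinuousMap.toLp 2 μ ℂ f‖ := fun f => by
    simpa using norm_le_norm_toLp_of_tendsto_twistedBirkhoffAverage μ hgen hξ hU (hΦ f)
  set ψ := Φ.extendOfNorm (ContinuousMap.toLp 2 μ ℂ : C(X, ℂ) →L[ℂ] Lp ℂ 2 μ).toLinearMap
  have hψ : ∀ f, ψ (ContinuousMap.toLp 2 μ ℂ f) = Φ f := LinearMap.extendOfNorm_eq
    (ContinuousMap.toLp_denseRange ℂ μ ℂ (p := 2) ENNReal.ofNat_ne_top) ⟨1, hΦL2⟩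
  set e := (InnerProductSpace.toDual ℂ (Lp ℂ 2 μ)).symm ψ
  have hT : MeasurePreserving T μ μ := ⟨T.continuous.measurable, hμ⟩
  have he : Lp.compMeasurePreserving T hT e = ξ • e :=
    Lp.compMeasurePreserving_toDual_symm_eq_smul (T : C(X, X)) hT hξ ψ fun f => by
      rw [hψ, hψ, hΦT]
  refine ⟨e, Lp.memLp e, fun he0 => hγ ?_,
    Lp.comp_ae_eq_smul_of_compMeasurePreserving_eq_smul hT he⟩
  rw [← hΦf₀, ← hψ, ← InnerProductSpace.toDual_symm_apply]
  change inner ℂ e _ = 0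
  rw [(Lp.eq_zero_iff_ae_eq_zero).2 he0, inner_zero_left]
end

section
/- Let (X,T,μ) be an ergodic measure-preserving system. If x ∈ X is a μ-generic point and ξ ∈ 𝕊¹ is not an eigenvalue of the Koopman operator U_T on L²(X,μ), then for every continuous f: X → ℂ the averages (1/n) ∑_{j=0}^{n-1} ξ^{-j} f(T^j x) converge to 0 as n → ∞. -/
/-!
Write `u j = ξ ^ (-j) * f (T^[j] x)` and `A_H = H⁻¹ ∑_{h<H} ξ^{-h} f ∘ T^h`. Replacing `u` by its
averages over windows of length `H` changes its Cesàro means by `O(H/N)`, and the window average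
at time `n` has modulus `|A_H (T^[n] x)|`; by Cauchy–Schwarz the Cesàro means of the window averages
are therefore controlled by the means of `|A_H|²` along the orbit of `x`, which tend to
`∫ |A_H|² dμ` because `x` is generic. Finally `A_H` is the `H`-th Birkhoff average of `f` under the
contraction `ξ⁻¹ U_T` of `L²(μ)`, which has no nonzero fixed vector since `ξ` is not an eigenvalue,
so `‖A_H‖_{L²} → 0` by von Neumann's mean ergodic theorem.
-/

open Filter Finset MeasureTheory Topology

section Cesaro

variable {𝕜 E : Type*} [RCLike 𝕜] [NormedAddCommGroup E] [NormedSpace 𝕜 E]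
  {u : ℕ → E} {M : ℝ}

lemma norm_sum_range_sub_sum_range_shift_le (hu : ∀ j, ‖u j‖ ≤ M) (N h : ℕ) :
    ‖∑ j ∈ range N, u j - ∑ j ∈ range N, u (h + j)‖ ≤ 2 * h * M := by
  have hshift : ∑ j ∈ range N, u j - ∑ j ∈ range N, u (h + j) =
      ∑ j ∈ range h, u j - ∑ j ∈ range h, u (N + j) := by
    rw [sub_eq_sub_iff_add_eq_add, ← sum_range_add, ← sum_range_add, add_comm h]
  have hbound : ∀ v : ℕ → E, (∀ j, ‖v j‖ ≤ M) → ‖∑ j ∈ range h, v j‖ ≤ h * M := fun v hv => by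
    simpa using norm_sum_le_of_le (range h) fun j _ => hv j
  rw [hshift]
  calc ‖∑ j ∈ range h, u j - ∑ j ∈ range h, u (N + j)‖
      ≤ h * M + h * M :=
        (norm_sub_le _ _).trans (add_le_add (hbound u hu) (hbound _ fun j => hu _))
    _ = 2 * h * M := by ring

lemma norm_sum_range_sub_sum_range_smoothed_le (hu : ∀ j, ‖u j‖ ≤ M) {H : ℕ} (hH : 0 < H)
    (N : ℕ) :
    ‖∑ n ∈ range N, u n - ∑ n ∈ range N, (H : 𝕜)⁻¹ • ∑ h ∈ range H, u (h + n)‖ ≤ 2 * H * M := by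
  have hH' : (H : 𝕜) ≠ 0 := Nat.cast_ne_zero.mpr hH.ne'
  have hrw : ∑ n ∈ range N, u n - ∑ n ∈ range N, (H : 𝕜)⁻¹ • ∑ h ∈ range H, u (h + n) =
      (H : 𝕜)⁻¹ • ∑ h ∈ range H, (∑ n ∈ range N, u n - ∑ n ∈ range N, u (h + n)) := by
    rw [← smul_sum, sum_comm, sum_sub_distrib, smul_sub, sum_const, card_range,
      ← Nat.cast_smul_eq_nsmul 𝕜, smul_smul, inv_mul_cancel₀ hH', one_smul]
  have hM : 0 ≤ M := (norm_nonneg _).trans (hu 0)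
  rw [hrw, norm_smul, norm_inv, RCLike.norm_natCast]
  calc (H : ℝ)⁻¹ * ‖∑ h ∈ range H, (∑ n ∈ range N, u n - ∑ n ∈ range N, u (h + n))‖
      ≤ (H : ℝ)⁻¹ * (H * (2 * H * M)) := by
        gcongr
        have hterm : ∀ h ∈ range H, ‖∑ n ∈ range N, u n - ∑ n ∈ range N, u (h + n)‖ ≤
            2 * H * M := fun h hh => by
          refine (norm_sum_range_sub_sum_range_shift_le hu N h).trans ?_
          gcongr
          exact_mod_cast (mem_range.mp hh).le
        simpa using norm_sum_le_of_le (range H) hterm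
    _ = 2 * H * M := by field_simp

lemma norm_average_sq_le (w : ℕ → E) (N : ℕ) :
    ‖(N : 𝕜)⁻¹ • ∑ n ∈ range N, w n‖ ^ 2 ≤ (N : ℝ)⁻¹ * ∑ n ∈ range N, ‖w n‖ ^ 2 := by
  rw [norm_smul, norm_inv, RCLike.norm_natCast]
  calc ((N : ℝ)⁻¹ * ‖∑ n ∈ range N, w n‖) ^ 2 ≤ ((∑ n ∈ range N, ‖w n‖) / N) ^ 2 := by
        rw [inv_mul_eq_div]; gcongr; exact norm_sum_le _ _
    _ ≤ (∑ n ∈ range N, ‖w n‖ ^ 2) / N := by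
        simpa using sum_div_card_sq_le_sum_sq_div_card (s := range N) (f := fun n => ‖w n‖)
    _ = _ := div_eq_inv_mul _ _

theorem tendsto_average_zero_of_smoothed (hu : ∀ j, ‖u j‖ ≤ M)
    (hsmooth : ∀ ε > 0, ∃ H : ℕ, 0 < H ∧ ∀ᶠ N : ℕ in atTop,
      (N : ℝ)⁻¹ * ∑ n ∈ range N, ‖(H : 𝕜)⁻¹ • ∑ h ∈ range H, u (h + n)‖ ^ 2 < ε) :
    Tendsto (fun N : ℕ => (N : 𝕜)⁻¹ • ∑ n ∈ range N, u n) atTop (𝓝 0) := by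
  rw [NormedAddGroup.tendsto_nhds_zero]
  intro ε hε
  obtain ⟨H, hH, hsmall⟩ := hsmooth ((ε / 2) ^ 2) (by positivity)
  have herror : Tendsto (fun N : ℕ => (N : ℝ)⁻¹ * (2 * H * M)) atTop (𝓝 0) := by
    simpa using tendsto_inv_atTop_nhds_zero_nat.mul_const (2 * (H : ℝ) * M)
  filter_upwards [hsmall, herror.eventually_lt_const (half_pos hε)] with N hN hNerror
  set v : ℕ → E := fun n => (H : 𝕜)⁻¹ • ∑ h ∈ range H, u (h + n)
  have hv : ‖(N : 𝕜)⁻¹ • ∑ n ∈ range N, v n‖ < ε / 2 :=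
    pow_lt_pow_iff_left₀ (norm_nonneg _) (by positivity) two_ne_zero |>.mp
      ((norm_average_sq_le v N).trans_lt hN)
  have hdiff : ‖(N : 𝕜)⁻¹ • ∑ n ∈ range N, u n - (N : 𝕜)⁻¹ • ∑ n ∈ range N, v n‖ ≤
      (N : ℝ)⁻¹ * (2 * H * M) := by
    rw [← smul_sub, norm_smul, norm_inv, RCLike.norm_natCast]
    gcongr
    exact norm_sum_range_sub_sum_range_smoothed_le hu hH N
  calc ‖(N : 𝕜)⁻¹ • ∑ n ∈ range N, u n‖
      ≤ ‖(N : 𝕜)⁻¹ • ∑ n ∈ range N, u n - (N : 𝕜)⁻¹ • ∑ n ∈ range N, v n‖ +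
        ‖(N : 𝕜)⁻¹ • ∑ n ∈ range N, v n‖ := norm_le_norm_sub_add _ _
    _ < ε / 2 + ε / 2 := add_lt_add_of_le_of_lt (hdiff.trans hNerror.le) hv
    _ = ε := add_halves ε

end Cesaro

theorem MeasureTheory.L2.norm_sq_eq_integral_norm_sq {α E : Type*} [MeasurableSpace α]
    {μ : Measure α} [NormedAddCommGroup E] [InnerProductSpace ℝ E] (G : Lp E 2 μ) :
    ‖G‖ ^ 2 = ∫ y, ‖G y‖ ^ 2 ∂μ := by
  simp only [← real_inner_self_eq_norm_sq, L2.inner_def]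

def IsBirkhoffGeneric {X : Type*} [TopologicalSpace X] [MeasurableSpace X] (μ : Measure X)
    (T : X → X) (x : X) : Prop :=
  ∀ f : C(X, ℂ), Tendsto (fun n : ℕ => (n : ℂ)⁻¹ * ∑ j ∈ range n, f (T^[j] x)) atTop
    (𝓝 (∫ y, f y ∂μ))

def IsKoopmanEigenvalue {X : Type*} [MeasurableSpace X] (μ : Measure X) (T : X → X) (ξ : ℂ) :
    Prop :=
  ∃ e : X → ℂ, MemLp e 2 μ ∧ ¬ (e =ᵐ[μ] 0) ∧ (fun y => e (T y)) =ᵐ[μ] (fun y => ξ * e y)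

lemma IsBirkhoffGeneric.tendsto_average_real {X : Type*} [TopologicalSpace X] [MeasurableSpace X]
    {μ : Measure X} {T : X → X} {x : X} (hx : IsBirkhoffGeneric μ T x) (φ : C(X, ℝ)) :
    Tendsto (fun n : ℕ => (n : ℝ)⁻¹ * ∑ j ∈ range n, φ (T^[j] x)) atTop (𝓝 (∫ y, φ y ∂μ)) := by
  have hre := (Complex.continuous_re.tendsto _).comp
    (hx ((ContinuousMap.mk ((↑) : ℝ → ℂ) Complex.continuous_ofReal).comp φ))
  simpa [Function.comp_def, integral_complex_ofReal] using hre

section TwistedAverage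

variable {X : Type*}

noncomputable def twistedAverage (T : X → X) (ξ : ℂ) (f : X → ℂ) (H : ℕ) (y : X) : ℂ :=
  (H : ℂ)⁻¹ * ∑ h ∈ range H, ξ ^ (-(h : ℤ)) * f (T^[h] y)

lemma twistedAverage_iterate (T : X → X) (ξ : ℂ) (f : X → ℂ) (H n : ℕ) (y : X) :
    (H : ℂ)⁻¹ * ∑ h ∈ range H, ξ ^ (-((h + n : ℕ) : ℤ)) * f (T^[h + n] y) =
      ξ ^ (-(n : ℤ)) * twistedAverage T ξ f H (T^[n] y) := by
  simp only [twistedAverage, mul_sum]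
  refine Finset.sum_congr rfl fun h _ => ?_
  simp only [Function.iterate_add_apply, zpow_neg, zpow_natCast, pow_add, mul_inv]
  ring

lemma continuous_twistedAverage [TopologicalSpace X] {T : X → X} (hT : Continuous T)
    {f : X → ℂ} (hf : Continuous f) (ξ : ℂ) (H : ℕ) : Continuous (twistedAverage T ξ f H) :=
  continuous_const.mul <| continuous_finsetSum _ fun h _ =>
    continuous_const.mul (hf.comp (hT.iterate h))

end TwistedAverage

section TwistedKoopman

variable {X : Type*} [MeasurableSpace X] {μ : Measure X} {T : X → X}

/-- `ξ⁻¹ U_T`: its fixed points are the eigenfunctions of `U_T` with eigenvalue `ξ`. -/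
noncomputable def twistedKoopman (hT : MeasurePreserving T μ μ) (ξ : ℂ) :
    Lp ℂ 2 μ →L[ℂ] Lp ℂ 2 μ :=
  ξ⁻¹ • (Lp.compMeasurePreservingₗᵢ ℂ T hT).toContinuousLinearMap

variable (hT : MeasurePreserving T μ μ) {ξ : ℂ}

lemma coeFn_twistedKoopman (G : Lp ℂ 2 μ) :
    ⇑(twistedKoopman hT ξ G) =ᵐ[μ] fun y => ξ⁻¹ * G (T y) := by
  have hdef : twistedKoopman hT ξ G = ξ⁻¹ • Lp.compMeasurePreserving T hT G := rfl
  filter_upwards [Lp.coeFn_smul ξ⁻¹ (Lp.compMeasurePreserving T hT G),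
    Lp.coeFn_compMeasurePreserving G hT] with y hsmul hcomp
  rw [hdef, hsmul, Pi.smul_apply, hcomp, Function.comp_apply, smul_eq_mul]

lemma norm_twistedKoopman_le (hξ : ‖ξ‖ = 1) : ‖twistedKoopman hT ξ‖ ≤ 1 := by
  refine ContinuousLinearMap.opNorm_le_bound _ zero_le_one fun G => ?_
  simp [twistedKoopman, norm_smul, hξ]

lemma coeFn_twistedKoopman_iterate_toLp {f : X → ℂ} (hf : MemLp f 2 μ) (h : ℕ) :
    ⇑((twistedKoopman hT ξ)^[h] (hf.toLp f)) =ᵐ[μ] fun y => ξ ^ (-(h : ℤ)) * f (T^[h] y) := by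
  induction h with
  | zero => simpa using hf.coeFn_toLp
  | succ h ih =>
    rw [Function.iterate_succ_apply']
    filter_upwards [coeFn_twistedKoopman hT _, hT.quasiMeasurePreserving.ae_eq_comp ih]
      with y hV hcomp
    rw [Function.comp_apply, Function.comp_apply] at hcomp
    rw [hV, hcomp]
    simp only [← Function.iterate_succ_apply, zpow_neg, zpow_natCast,
      pow_succ, mul_inv, mul_assoc]
    ring

lemma coeFn_birkhoffAverage_twistedKoopman {f : X → ℂ} (hf : MemLp f 2 μ) (H : ℕ) :
    ⇑(birkhoffAverage ℂ (twistedKoopman hT ξ) id H (hf.toLp f)) =ᵐ[μ]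
      twistedAverage T ξ f H := by
  have hiter : ∀ᵐ y ∂μ, ∀ h ∈ range H,
      ((twistedKoopman hT ξ)^[h] (hf.toLp f) : Lp ℂ 2 μ) y = ξ ^ (-(h : ℤ)) * f (T^[h] y) :=
    (eventually_all_finset _).mpr fun h _ => coeFn_twistedKoopman_iterate_toLp hT hf h
  filter_upwards [Lp.coeFn_smul (H : ℂ)⁻¹ (∑ h ∈ range H, (twistedKoopman hT ξ)^[h] (hf.toLp f)),
    Lp.coeFn_fun_finsetSum (range H) fun h => (twistedKoopman hT ξ)^[h] (hf.toLp f), hiter]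
    with y hsmul hsum hiter
  simp only [birkhoffAverage, birkhoffSum, id]
  rw [hsmul, Pi.smul_apply, hsum, twistedAverage, smul_eq_mul]
  exact congrArg _ (sum_congr rfl hiter)

lemma eqLocus_twistedKoopman_eq_bot (hξ : ξ ≠ 0)
    (hnoteig : ¬ IsKoopmanEigenvalue μ T ξ) :
    (twistedKoopman hT ξ).eqLocus 1 = ⊥ := by
  refine (Submodule.eq_bot_iff _).mpr fun G (hG : twistedKoopman hT ξ G = G) => ?_
  by_contra hG0
  refine hnoteig ⟨G, Lp.memLp G, fun h => hG0 (Lp.eq_zero_iff_ae_eq_zero.mpr h), ?_⟩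
  filter_upwards [coeFn_twistedKoopman hT G] with y hy
  rw [hG] at hy
  rw [hy, mul_inv_cancel_left₀ hξ]

theorem tendsto_birkhoffAverage_twistedKoopman (hξ : ‖ξ‖ = 1)
    (hnoteig : ¬ IsKoopmanEigenvalue μ T ξ) (G : Lp ℂ 2 μ) :
    Tendsto (birkhoffAverage ℂ (twistedKoopman hT ξ) id · G) atTop (𝓝 0) := by
  have hξ0 : ξ ≠ 0 := norm_ne_zero_iff.mp (hξ ▸ one_ne_zero)
  have hfix := eqLocus_twistedKoopman_eq_bot hT hξ0 hnoteig
  convert (twistedKoopman hT ξ).tendsto_birkhoffAverage_orthogonalProjection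
    (norm_twistedKoopman_le hT hξ) G using 2
  exact ((Submodule.eq_bot_iff _).mp hfix _ (Submodule.coe_mem _)).symm

end TwistedKoopman

theorem tendsto_integral_norm_sq_twistedAverage {X : Type*} [MeasurableSpace X] {μ : Measure X}
    {T : X → X} (hT : MeasurePreserving T μ μ) {ξ : ℂ} (hξ : ‖ξ‖ = 1)
    (hnoteig : ¬ IsKoopmanEigenvalue μ T ξ) {f : X → ℂ} (hf : MemLp f 2 μ) :
    Tendsto (fun H => ∫ y, ‖twistedAverage T ξ f H y‖ ^ 2 ∂μ) atTop (𝓝 0) := by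
  have hL2 := (tendsto_birkhoffAverage_twistedKoopman hT hξ hnoteig (hf.toLp f)).norm.pow 2
  refine (hL2.congr fun H => ?_).trans (by simp)
  rw [L2.norm_sq_eq_integral_norm_sq]
  refine integral_congr_ae ?_
  filter_upwards [coeFn_birkhoffAverage_twistedKoopman hT hf H] with y hy
  rw [hy]

/-- for an ergodic system, if `ξ` is not an eigenvalue of the
Koopman operator, then the twisted Birkhoff averages along any generic point
converge to `0` for every continuous function. -/
theorem stmt4 {X : Type*} [MetricSpace X] [CompactSpace X]
    [MeasurableSpace X] [BorelSpace X]
    (T : X ≃ₜ X)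
    (μ : Measure X) [IsProbabilityMeasure μ] (herg : Ergodic (⇑T) μ)
    (x : X)
    (hgen : ∀ f : C(X, ℂ),
      Tendsto (fun n : ℕ => (n : ℂ)⁻¹ * ∑ j ∈ Finset.range n, f ((⇑T)^[j] x)) atTop
        (nhds (∫ y, f y ∂μ)))
    (ξ : ℂ) (hξ : ‖ξ‖ = 1)
    (hnoteig : ¬ ∃ e : X → ℂ, MemLp e 2 μ ∧ ¬ (e =ᵐ[μ] 0) ∧
      (fun y => e (T y)) =ᵐ[μ] (fun y => ξ * e y)) :
    ∀ f : C(X, ℂ),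
      Tendsto (fun n : ℕ => (n : ℂ)⁻¹ * ∑ j ∈ Finset.range n, ξ ^ (-(j : ℤ)) * f ((⇑T)^[j] x))
        atTop (nhds 0) := by
  intro f
  have hL2 := tendsto_integral_norm_sq_twistedAverage herg.toMeasurePreserving hξ hnoteig
    (f.memLp μ ℂ)
  refine tendsto_average_zero_of_smoothed (𝕜 := ℂ) (M := ‖f‖) (fun j => ?_) fun ε hε => ?_
  · rw [norm_mul, norm_zpow, hξ, one_zpow, one_mul]
    exact f.norm_coe_le_norm _
  obtain ⟨H, hsmall, hH⟩ := ((hL2.eventually_lt_const hε).and (eventually_gt_atTop 0)).exists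
  refine ⟨H, hH, ?_⟩
  have hcont := continuous_twistedAverage T.continuous f.continuous ξ H
  have hgenH := IsBirkhoffGeneric.tendsto_average_real (T := T) hgen
    ⟨fun y => ‖twistedAverage T ξ f H y‖ ^ 2, by fun_prop⟩
  filter_upwards [hgenH.eventually_lt_const hsmall] with N hN
  simpa only [ContinuousMap.coe_mk, smul_eq_mul, twistedAverage_iterate, norm_mul, norm_zpow, hξ,
    one_zpow, one_mul] using hN
end

section
/- Let (X,ρ) be a compact metric space, T: X → X continuous, and f: X → ℂ continuous. For every ε > 0 there is δ > 0 such that: if x, x' ∈ X satisfy D_B(x,x') < δ (Besicovitch pseudometric), then there exists N ≥ 1 such that for every n ≥ N and every ξ ∈ ℂ with |ξ| = 1, |(1/n) ∑_{j=0}^{n−1} ξ^{-j} f(T^j x) − (1/n) ∑_{j=0}^{n−1} ξ^{-j} f(T^j x')| ≤ ε. -/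
/-!
A continuous `f` on a compact space is uniformly continuous and bounded, so for every `ε` there is
a constant `C` with `‖f a - f b‖ ≤ ε / 2 + C ρ(a, b)`. Since `|ξ| = 1`, the twist `ξ^{-j}` does not
affect absolute values, and averaging this bound along the two orbits gives a difference of
twisted averages at most `ε / 2 + C` times the Cesàro mean of `ρ(Tʲx, Tʲx')`; the latter is
eventually below `δ` as soon as its limsup is.
-/

open Filter Finset

/-- The bound is `ε` on pairs closer than the modulus of uniform continuity of `ε`, and the
diameter of the range elsewhere. -/
theorem UniformContinuous.exists_dist_le_add_mul_dist {α β : Type*} [PseudoMetricSpace α]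
    [PseudoMetricSpace β] {f : α → β} (hf : UniformContinuous f)
    (hb : Bornology.IsBounded (Set.range f)) {ε : ℝ} (hε : 0 < ε) :
    ∃ C ≥ 0, ∀ a b, dist (f a) (f b) ≤ ε + C * dist a b := by
  obtain ⟨η, hη, hfη⟩ := Metric.uniformContinuous_iff.1 hf ε hε
  obtain ⟨K, hK⟩ := Metric.isBounded_range_iff.1 hb
  refine ⟨max K 0 / η, by positivity, fun a b => ?_⟩
  have hC : 0 ≤ max K 0 / η * dist a b := by positivity
  rcases lt_or_ge (dist a b) η with hab | hab
  · linarith [hfη hab]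
  · calc dist (f a) (f b) ≤ max K 0 := (hK a b).trans (le_max_left _ _)
      _ = max K 0 / η * η := (div_mul_cancel₀ _ hη.ne').symm
      _ ≤ ε + max K 0 / η * dist a b := by nlinarith [le_max_right K 0]

theorem isBoundedUnder_le_cesaro {u : ℕ → ℝ} {K : ℝ} (hu : ∀ n, u n ≤ K) :
    IsBoundedUnder (· ≤ ·) atTop (fun N : ℕ => (N : ℝ)⁻¹ * ∑ n ∈ range N, u n) := by
  refine isBoundedUnder_of_eventually_le (a := K) ?_
  filter_upwards [eventually_ge_atTop 1] with N hN
  have hN' : (0 : ℝ) < N := by exact_mod_cast hN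
  rw [inv_mul_le_iff₀ hN']
  calc ∑ n ∈ range N, u n ≤ ∑ _n ∈ range N, K := sum_le_sum fun n _ => hu n
    _ = N * K := by simp

theorem inv_mul_sum_le_add_mul_inv_mul_sum {a b : ℕ → ℝ} {c C : ℝ}
    (hab : ∀ j, a j ≤ c + C * b j) {n : ℕ} (hn : 1 ≤ n) :
    (n : ℝ)⁻¹ * ∑ j ∈ range n, a j ≤ c + C * ((n : ℝ)⁻¹ * ∑ j ∈ range n, b j) := by
  have hn' : (0 : ℝ) < n := by exact_mod_cast hn
  calc (n : ℝ)⁻¹ * ∑ j ∈ range n, a j ≤ (n : ℝ)⁻¹ * ∑ j ∈ range n, (c + C * b j) := by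
        gcongr with j; exact hab j
    _ = c + C * ((n : ℝ)⁻¹ * ∑ j ∈ range n, b j) := by
        rw [sum_add_distrib, sum_const, card_range, nsmul_eq_mul, ← mul_sum]
        field_simp

theorem norm_twisted_average_sub_le {𝕜 : Type*} [RCLike 𝕜] {ξ : 𝕜} (hξ : ‖ξ‖ = 1)
    (g h : ℕ → 𝕜) (n : ℕ) :
    ‖(n : 𝕜)⁻¹ * ∑ j ∈ range n, ξ ^ (-(j : ℤ)) * g j
        - (n : 𝕜)⁻¹ * ∑ j ∈ range n, ξ ^ (-(j : ℤ)) * h j‖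
      ≤ (n : ℝ)⁻¹ * ∑ j ∈ range n, dist (g j) (h j) := by
  rw [← mul_sub, ← sum_sub_distrib, norm_mul, norm_inv, RCLike.norm_natCast]
  gcongr
  refine (norm_sum_le _ _).trans (sum_le_sum fun j _ => ?_)
  rw [← mul_sub, norm_mul, norm_zpow, hξ, one_zpow, one_mul, dist_eq_norm]

theorem stmt10_general {X : Type*} [MetricSpace X] [CompactSpace X]
    (T : X → X) (f : C(X, ℂ)) :
    ∀ ε > (0 : ℝ), ∃ δ > (0 : ℝ), ∀ x x' : X,
      limsup (fun N : ℕ => (N : ℝ)⁻¹ * ∑ n ∈ Finset.range N, dist (T^[n] x) (T^[n] x')) atTop < δ →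
      ∃ N : ℕ, 1 ≤ N ∧ ∀ n ≥ N, ∀ ξ : ℂ, ‖ξ‖ = 1 →
        ‖((n : ℂ)⁻¹ * ∑ j ∈ Finset.range n, ξ ^ (-(j : ℤ)) * f (T^[j] x)
            - (n : ℂ)⁻¹ * ∑ j ∈ Finset.range n, ξ ^ (-(j : ℤ)) * f (T^[j] x'))‖ ≤ ε := by
  intro ε hε
  obtain ⟨C, hC, hfC⟩ := (CompactSpace.uniformContinuous_of_continuous f.continuous)
    |>.exists_dist_le_add_mul_dist (isCompact_range f.continuous).isBounded (half_pos hε)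
  refine ⟨ε / (2 * (C + 1)), by positivity, fun x x' hlim => ?_⟩
  obtain ⟨K, hK⟩ := Metric.isBounded_iff.1 (isCompact_univ (X := X)).isBounded
  have hbdd := isBoundedUnder_le_cesaro fun n =>
    hK (Set.mem_univ (T^[n] x)) (Set.mem_univ (T^[n] x'))
  obtain ⟨N, hN⟩ := eventually_atTop.1
    ((eventually_lt_of_limsup_lt hlim hbdd).and (eventually_ge_atTop 1))
  refine ⟨N, (hN N le_rfl).2, fun n hn ξ hξ => ?_⟩
  obtain ⟨hδ, hn1⟩ := hN n hn
  calc _ ≤ (n : ℝ)⁻¹ * ∑ j ∈ range n, dist (f (T^[j] x)) (f (T^[j] x')) :=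
        norm_twisted_average_sub_le hξ _ _ n
    _ ≤ ε / 2 + C * ((n : ℝ)⁻¹ * ∑ j ∈ range n, dist (T^[j] x) (T^[j] x')) :=
        inv_mul_sum_le_add_mul_inv_mul_sum (fun j => hfC _ _) hn1
    _ ≤ ε / 2 + C * (ε / (2 * (C + 1))) := by gcongr
    _ ≤ ε := by
        have : C * (ε / (2 * (C + 1))) ≤ ε / 2 := by
          rw [mul_div_assoc', div_le_div_iff₀ (by positivity) two_pos]
          nlinarith
        linarith

/-- if two points are close in the Besicovitch pseudometric, then
their twisted Birkhoff averages are eventually uniformly close, uniformly in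
`ξ` on the unit circle. -/
theorem stmt10 {X : Type*} [MetricSpace X] [CompactSpace X]
    (T : X → X) (hT : Continuous T) (f : C(X, ℂ)) :
    ∀ ε > (0 : ℝ), ∃ δ > (0 : ℝ), ∀ x x' : X,
      limsup (fun N : ℕ => (N : ℝ)⁻¹ * ∑ n ∈ Finset.range N, dist (T^[n] x) (T^[n] x')) atTop < δ →
      ∃ N : ℕ, 1 ≤ N ∧ ∀ n ≥ N, ∀ ξ : ℂ, ‖ξ‖ = 1 →
        ‖((n : ℂ)⁻¹ * ∑ j ∈ Finset.range n, ξ ^ (-(j : ℤ)) * f (T^[j] x)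
            - (n : ℂ)⁻¹ * ∑ j ∈ Finset.range n, ξ ^ (-(j : ℤ)) * f (T^[j] x'))‖ ≤ ε :=
  stmt10_general T f
end

section
/- Let (X,ρ) be a compact metric space and T: X → X a homeomorphism. The metric ρ̄(μ,ν) = inf_{λ ∈ J(μ,ν)} ∫ ρ dλ on the space M_T(X) of T-invariant Borel probability measures is complete: every ρ̄-Cauchy sequence converges in ρ̄ to some μ ∈ M_T(X). -/
open MeasureTheory Filter

/-- A joining of two `T`-invariant measures. -/
def IsJoining {X : Type*} [MeasurableSpace X] (T : X → X) (μ ν : Measure X)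
    (lam : Measure (X × X)) : Prop :=
  IsProbabilityMeasure lam ∧ Measure.map (Prod.map T T) lam = lam ∧
    Measure.map Prod.fst lam = μ ∧ Measure.map Prod.snd lam = ν

/-- The `ρ̄` distance: infimum of `∫ ρ` over joinings. -/
noncomputable def rhoBar {X : Type*} [MetricSpace X] [MeasurableSpace X] (T : X → X)
    (μ ν : Measure X) : ℝ :=
  sInf {r : ℝ | ∃ lam : Measure (X × X), IsJoining T μ ν lam ∧ r = ∫ p, dist p.1 p.2 ∂lam}

/-!
The space of probability measures on a compact metric space is weak* compact and metrizable,
so a subsequence of the Cauchy sequence `μ m` converges weak* to some `ν`, which is again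
`T`-invariant. For fixed `m`, joinings of `μ m` with the later terms of that subsequence
of cost `< ε` have, again by compactness, a weak* limit point. Pushforwards under continuous
maps are weak* continuous, so the limit point is a joining of `μ m` and `ν`, and since `dist`
is continuous and bounded its cost is `≤ ε`.
-/

open Topology

namespace MeasureTheory.ProbabilityMeasure

variable {ι Ω Ω' : Type*} {l : Filter ι}
  [MeasurableSpace Ω] [TopologicalSpace Ω] [OpensMeasurableSpace Ω]

lemma toMeasure_map_eq_of_tendsto [MeasurableSpace Ω'] [TopologicalSpace Ω']
    [HasOuterApproxClosed Ω'] [BorelSpace Ω'] [l.NeBot] {f : Ω → Ω'} (hf : Continuous f)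
    {P : ι → ProbabilityMeasure Ω} {P₀ : ProbabilityMeasure Ω} {Q : ι → ProbabilityMeasure Ω'}
    {Q₀ : ProbabilityMeasure Ω'} (hP : Tendsto P l (𝓝 P₀)) (hQ : Tendsto Q l (𝓝 Q₀))
    (hPQ : ∀ i, (P i : Measure Ω).map f = Q i) :
    (P₀ : Measure Ω).map f = Q₀ := by
  have hmap : (fun i => (P i).map hf.aemeasurable) = Q :=
    funext fun i => toMeasure_injective (by rw [toMeasure_map, hPQ])
  have hlim := ((continuous_map hf).tendsto P₀).comp hP
  rw [Function.comp_def, hmap] at hlim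
  rw [← toMeasure_map P₀ hf.aemeasurable, tendsto_nhds_unique hlim hQ]

lemma integral_le_of_tendsto [CompactSpace Ω] {f : Ω → ℝ} (hf : Continuous f)
    {P : ι → ProbabilityMeasure Ω} {P₀ : ProbabilityMeasure Ω} [l.NeBot]
    (hP : Tendsto P l (𝓝 P₀)) {c : ℝ} (hc : ∀ᶠ i in l, ∫ x, f x ∂(P i : Measure Ω) ≤ c) :
    ∫ x, f x ∂(P₀ : Measure Ω) ≤ c :=
  le_of_tendsto (tendsto_iff_forall_integral_tendsto.mp hP
    (BoundedContinuousFunction.mkOfCompact ⟨f, hf⟩)) hc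

end MeasureTheory.ProbabilityMeasure

open MeasureTheory.ProbabilityMeasure

section RhoBar

variable {X : Type*} [MeasurableSpace X]

lemma isJoining_prod {T : X → X} (hT : Measurable T) {μ ν : Measure X}
    [IsProbabilityMeasure μ] [IsProbabilityMeasure ν]
    (hμ : μ.map T = μ) (hν : ν.map T = ν) :
    IsJoining T μ ν (μ.prod ν) := by
  refine ⟨inferInstance, ?_, by simp, by simp⟩
  rw [← Measure.map_prod_map μ ν hT hT, hμ, hν]

variable [MetricSpace X]

lemma rhoBar_nonneg (T : X → X) (μ ν : Measure X) : 0 ≤ rhoBar T μ ν := by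
  refine Real.sInf_nonneg ?_
  rintro r ⟨J, -, rfl⟩
  exact integral_nonneg fun _ => dist_nonneg

lemma rhoBar_le_integral {T : X → X} {μ ν : Measure X} {J : Measure (X × X)}
    (hJ : IsJoining T μ ν J) : rhoBar T μ ν ≤ ∫ p, dist p.1 p.2 ∂J := by
  refine csInf_le ⟨0, ?_⟩ ⟨J, hJ, rfl⟩
  rintro r ⟨J', -, rfl⟩
  exact integral_nonneg fun _ => dist_nonneg

lemma exists_isJoining_integral_lt {T : X → X} (hT : Measurable T) {μ ν : Measure X}
    [IsProbabilityMeasure μ] [IsProbabilityMeasure ν]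
    (hμ : μ.map T = μ) (hν : ν.map T = ν) {ε : ℝ} (h : rhoBar T μ ν < ε) :
    ∃ J : Measure (X × X), IsJoining T μ ν J ∧ ∫ p, dist p.1 p.2 ∂J < ε := by
  obtain ⟨r, ⟨J, hJ, rfl⟩, hr⟩ :=
    exists_lt_of_csInf_lt (s := {r : ℝ | ∃ J, IsJoining T μ ν J ∧ r = ∫ p, dist p.1 p.2 ∂J})
      ⟨_, μ.prod ν, isJoining_prod hT hμ hν, rfl⟩ h
  exact ⟨J, hJ, hr⟩

theorem rhoBar_le_of_tendsto [BorelSpace X] [CompactSpace X] {T : X → X} (hT : Continuous T)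
    {μ : Measure X} [IsProbabilityMeasure μ] (hμ : μ.map T = μ)
    {ν : ℕ → ProbabilityMeasure X} {ν₀ : ProbabilityMeasure X} (hν : Tendsto ν atTop (𝓝 ν₀))
    (hνT : ∀ k, (ν k : Measure X).map T = ν k) {ε : ℝ}
    (hε : ∀ᶠ k in atTop, rhoBar T μ (ν k) < ε) :
    rhoBar T μ ν₀ ≤ ε := by
  obtain ⟨K, hK⟩ := eventually_atTop.1 hε
  have hjoin : ∀ k, ∃ J : ProbabilityMeasure (X × X),
      IsJoining T μ (ν (K + k)) J ∧ ∫ p, dist p.1 p.2 ∂(J : Measure (X × X)) < ε := fun k =>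
    have ⟨J, hJ, hcost⟩ := exists_isJoining_integral_lt hT.measurable hμ (hνT _)
      (hK _ (Nat.le_add_right K k))
    ⟨⟨J, hJ.1⟩, hJ, hcost⟩
  choose J hJ hcost using hjoin
  obtain ⟨J₀, ψ, hψ, hJ₀⟩ := CompactSpace.tendsto_subseq J
  have hνψ : Tendsto (fun j => ν (K + ψ j)) atTop (𝓝 ν₀) :=
    hν.comp (tendsto_atTop_mono (fun j => Nat.le_add_left (ψ j) K) hψ.tendsto_atTop)
  have hJ₀join : IsJoining T μ ν₀ J₀ :=
    ⟨inferInstance,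
      toMeasure_map_eq_of_tendsto (hT.prodMap hT) hJ₀ hJ₀ fun j => (hJ (ψ j)).2.1,
      toMeasure_map_eq_of_tendsto (Q := fun _ => ⟨μ, inferInstance⟩) continuous_fst hJ₀
        tendsto_const_nhds fun j => (hJ (ψ j)).2.2.1,
      toMeasure_map_eq_of_tendsto continuous_snd hJ₀ hνψ fun j => (hJ (ψ j)).2.2.2⟩
  exact (rhoBar_le_integral hJ₀join).trans
    (integral_le_of_tendsto continuous_dist hJ₀ (.of_forall fun j => (hcost (ψ j)).le))

end RhoBar

/-- the metric `ρ̄` is complete on the space of `T`-invariant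
Borel probability measures. -/
theorem stmt13 {X : Type*} [MetricSpace X] [CompactSpace X]
    [MeasurableSpace X] [BorelSpace X] (T : X ≃ₜ X)
    (μ : ℕ → Measure X) (hprob : ∀ m, IsProbabilityMeasure (μ m))
    (hinv : ∀ m, Measure.map (⇑T) (μ m) = μ m)
    (hcauchy : ∀ ε > (0 : ℝ), ∃ N : ℕ, ∀ i ≥ N, ∀ j ≥ N, rhoBar (⇑T) (μ i) (μ j) < ε) :
    ∃ ν : Measure X, IsProbabilityMeasure ν ∧ Measure.map (⇑T) ν = ν ∧
      Tendsto (fun m => rhoBar (⇑T) (μ m) ν) atTop (nhds 0) := by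
  let P : ℕ → ProbabilityMeasure X := fun m => ⟨μ m, hprob m⟩
  obtain ⟨ν, φ, hφ, hPν⟩ := CompactSpace.tendsto_subseq P
  have hνT : (ν : Measure X).map T = ν :=
    toMeasure_map_eq_of_tendsto T.continuous hPν hPν fun k => hinv (φ k)
  refine ⟨ν, inferInstance, hνT, Metric.tendsto_atTop.2 fun ε hε => ?_⟩
  obtain ⟨N, hN⟩ := hcauchy (ε / 2) (half_pos hε)
  refine ⟨N, fun m hm => ?_⟩
  have : IsProbabilityMeasure (μ m) := hprob m
  have hle : rhoBar T (μ m) ν ≤ ε / 2 :=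
    rhoBar_le_of_tendsto T.continuous (hinv m) hPν (fun k => hinv (φ k))
      (eventually_atTop.2 ⟨N, fun k hk => hN m hm (φ k) (hk.trans hφ.le_apply)⟩)
  rw [Real.dist_0_eq_abs, abs_of_nonneg (rhoBar_nonneg _ _ _)]
  linarith
end

section
/- Let (X,T) and (Y,S) be topological dynamical systems, μ ∈ M_T(X) and ν ∈ M_S(Y) ergodic, and F: X×Y → ℝ continuous. Let λ be an ergodic joining of μ and ν achieving F̄(μ,ν) = ∫ F dλ, and let X' ⊆ X, Y' ⊆ Y be Borel sets with μ(X') = ν(Y') = 1. Then there exist Borel sets X'' ⊆ X' and Y'' ⊆ Y' with μ(X'') = ν(Y'') = 1 such that for every x'' ∈ X'' there exists y'' ∈ Y'' with lim_n (1/n) ∑_{j=0}^{n−1} F(T^j x'', S^j y'') = F̄(μ,ν). -/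
/-!
By Birkhoff's pointwise ergodic theorem for the ergodic system `(X × Y, T × S, λ)`, the averages
of `F` along the orbit of `λ`-almost every pair converge to `∫ F dλ = F̄(μ,ν)`; for bounded `F`
this follows from Garsia's maximal inequality applied to the invariant set where the `limsup` of
the averages exceeds a level `c > ∫ F dλ`. By inner regularity of `λ`, the good pairs lying in
`X' × Y'` contain a σ-compact set `K` of full measure. Its coordinate projections are σ-compact,
hence Borel, have full measure because `μ` and `ν` are the marginals of `λ`, and every point of
the first projection is paired inside `K` with a point of the second.
-/

open MeasureTheory Filter

/-- A joining of `μ ∈ M_T(X)` and `ν ∈ M_S(Y)`. -/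
def IsJoining2 {X Y : Type*} [MeasurableSpace X] [MeasurableSpace Y] (T : X → X) (S : Y → Y)
    (μ : Measure X) (ν : Measure Y) (lam : Measure (X × Y)) : Prop :=
  IsProbabilityMeasure lam ∧ Measure.map (Prod.map T S) lam = lam ∧
    Measure.map Prod.fst lam = μ ∧ Measure.map Prod.snd lam = ν

/-- `F̄(μ,ν)`: infimum of `∫ F` over joinings of `μ` and `ν`. -/
noncomputable def Fbar {X Y : Type*} [MeasurableSpace X] [MeasurableSpace Y]
    (T : X → X) (S : Y → Y) (F : X × Y → ℝ) (μ : Measure X) (ν : Measure Y) : ℝ :=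
  sInf {r : ℝ | ∃ lam : Measure (X × Y), IsJoining2 T S μ ν lam ∧ r = ∫ p, F p ∂lam}

open Topology

section MaximalErgodic

variable {α : Type*} (f : α → α) (g : α → ℝ)

noncomputable def birkhoffMax : ℕ → α → ℝ
  | 0 => 0
  | n + 1 => birkhoffMax n ⊔ birkhoffSum f g (n + 1)

theorem birkhoffMax_nonneg (n : ℕ) (x : α) : 0 ≤ birkhoffMax f g n x := by
  induction n with
  | zero => exact le_rfl
  | succ n ih => exact ih.trans le_sup_left

theorem birkhoffMax_mono (x : α) : Monotone fun n => birkhoffMax f g n x :=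
  monotone_nat_of_le_succ fun _ => le_sup_left

theorem birkhoffSum_le_birkhoffMax {k n : ℕ} (hkn : k ≤ n) (x : α) :
    birkhoffSum f g k x ≤ birkhoffMax f g n x := by
  induction n with
  | zero => simp [Nat.le_zero.1 hkn, birkhoffMax]
  | succ n ih =>
    rcases hkn.lt_or_eq with hk | rfl
    · exact (ih (Nat.lt_succ_iff.1 hk)).trans le_sup_left
    · exact le_sup_right

theorem birkhoffMax_le_max_add (n : ℕ) (x : α) :
    birkhoffMax f g n x ≤ max 0 (g x + birkhoffMax f g n (f x)) := by
  induction n with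
  | zero => exact le_max_left _ _
  | succ n ih =>
    refine sup_le (ih.trans ?_) ?_
    · gcongr
      exact birkhoffMax_mono f g (f x) n.le_succ
    · rw [birkhoffSum_succ']
      exact le_max_of_le_right (by gcongr; exact birkhoffSum_le_birkhoffMax f g n.le_succ _)

variable [MeasurableSpace α] {μ : Measure α} {f g}

theorem measurable_birkhoffSum (hf : Measurable f) (hg : Measurable g) (n : ℕ) :
    Measurable (birkhoffSum f g n) :=
  Finset.measurable_sum _ fun k _ => hg.comp (hf.iterate k)

theorem measurable_birkhoffAverage (hf : Measurable f) (hg : Measurable g) (n : ℕ) :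
    Measurable (birkhoffAverage ℝ f g n) :=
  (measurable_birkhoffSum hf hg n).const_smul ((n : ℝ)⁻¹)

theorem measurable_birkhoffMax (hf : Measurable f) (hg : Measurable g) (n : ℕ) :
    Measurable (birkhoffMax f g n) := by
  induction n with
  | zero => exact measurable_const
  | succ n ih => exact ih.sup (measurable_birkhoffSum hf hg _)

theorem integrable_birkhoffSum (hf : MeasurePreserving f μ μ) (hg : Integrable g μ) (n : ℕ) :
    Integrable (birkhoffSum f g n) μ :=
  integrable_finsetSum _ fun k _ => (hf.iterate k).integrable_comp_of_integrable hg

theorem integrable_birkhoffMax (hf : MeasurePreserving f μ μ) (hg : Integrable g μ) (n : ℕ) :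
    Integrable (birkhoffMax f g n) μ := by
  induction n with
  | zero => exact integrable_zero _ _ _
  | succ n ih => exact ih.sup (integrable_birkhoffSum hf hg _)

/-- Maximal ergodic inequality, by Garsia's argument: integrate `M - M ∘ f ≤ g` over `{0 < M}`,
outside of which `M` vanishes, and use `∫ M ∘ f = ∫ M`. -/
theorem setIntegral_birkhoffMax_pos_nonneg (hf : MeasurePreserving f μ μ) (hg : Measurable g)
    (hgi : Integrable g μ) (n : ℕ) :
    0 ≤ ∫ x in {x | 0 < birkhoffMax f g n x}, g x ∂μ := by
  set M := birkhoffMax f g n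
  set E := {x | 0 < M x}
  have hM : Measurable M := measurable_birkhoffMax hf.measurable hg n
  have hE : MeasurableSet E := measurableSet_lt measurable_const hM
  have hMi : Integrable M μ := integrable_birkhoffMax hf hgi n
  have hMfi : Integrable (M ∘ f) μ := hf.integrable_comp_of_integrable hMi
  have hM_comp : ∫ x, M (f x) ∂μ = ∫ x, M x ∂μ := by
    rw [← integral_map hf.measurable.aemeasurable (hf.map_eq ▸ hM.aestronglyMeasurable),
      hf.map_eq]
  have hM_on : ∫ x in E, M x ∂μ = ∫ x, M x ∂μ :=
    setIntegral_eq_integral_of_forall_compl_eq_zero fun x hx =>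
      (not_lt.1 hx).antisymm (birkhoffMax_nonneg f g n x)
  have hMf_on : ∫ x in E, M (f x) ∂μ ≤ ∫ x, M (f x) ∂μ :=
    setIntegral_le_integral hMfi (.of_forall fun x => birkhoffMax_nonneg f g n (f x))
  have hgap : ∀ x ∈ E, M x - M (f x) ≤ g x := fun x hx => by
    rcases le_max_iff.1 (birkhoffMax_le_max_add f g n x) with h | h
    · exact absurd hx h.not_gt
    · linarith
  calc (0 : ℝ) ≤ ∫ x in E, M x ∂μ - ∫ x in E, M (f x) ∂μ := by linarith
    _ = ∫ x in E, (M x - M (f x)) ∂μ := (integral_sub hMi.integrableOn hMfi.integrableOn).symm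
    _ ≤ ∫ x in E, g x ∂μ :=
      setIntegral_mono_on (hMi.integrableOn.sub hMfi.integrableOn) hgi.integrableOn hE hgap

theorem integral_nonneg_of_ae_exists_birkhoffSum_pos (hf : MeasurePreserving f μ μ)
    (hg : Measurable g) (hgi : Integrable g μ) (h : ∀ᵐ x ∂μ, ∃ n, 0 < birkhoffSum f g n x) :
    0 ≤ ∫ x, g x ∂μ := by
  set E : ℕ → Set α := fun n => {x | 0 < birkhoffMax f g n x}
  have hE : ∀ n, MeasurableSet (E n) := fun n =>
    measurableSet_lt measurable_const (measurable_birkhoffMax hf.measurable hg n)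
  have hE_mono : Monotone E := fun m n hmn x hx => hx.trans_le (birkhoffMax_mono f g x hmn)
  have hE_ae : (⋃ n, E n) =ᵐ[μ] Set.univ := by
    refine eventuallyEq_univ.2 (mem_of_superset h fun x ⟨k, hk⟩ => ?_)
    exact Set.mem_iUnion.2 ⟨k, hk.trans_le (birkhoffSum_le_birkhoffMax f g le_rfl x)⟩
  have hlim := tendsto_setIntegral_of_monotone hE hE_mono hgi.integrableOn
  rw [setIntegral_congr_set hE_ae, setIntegral_univ] at hlim
  exact ge_of_tendsto' hlim fun n => setIntegral_birkhoffMax_pos_nonneg hf hg hgi n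

end MaximalErgodic

theorem Filter.limsup_add_eq_of_tendsto_zero {ι : Type*} {l : Filter ι} [l.NeBot] {u v : ι → ℝ}
    (hu : l.IsBoundedUnder (· ≤ ·) u) (hu' : l.IsBoundedUnder (· ≥ ·) u)
    (hv : Tendsto v l (𝓝 0)) : limsup (u + v) l = limsup u l := by
  refine le_antisymm ?_ ?_
  · have := limsup_add_le hu' hu hv.isBoundedUnder_ge.isCoboundedUnder_le hv.isBoundedUnder_le
    rwa [hv.limsup_eq, add_zero] at this
  · have := le_limsup_add hu hu'.isCoboundedUnder_le hv.isBoundedUnder_le hv.isBoundedUnder_ge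
    rwa [hv.liminf_eq, add_zero] at this

section PointwiseErgodic

variable {α : Type*} {f : α → α} {g : α → ℝ} {C : ℝ}

theorem abs_birkhoffAverage_le (hC : ∀ x, |g x| ≤ C) (n : ℕ) (x : α) :
    |birkhoffAverage ℝ f g n x| ≤ C := by
  rcases n.eq_zero_or_pos with rfl | hn
  · simpa using (abs_nonneg _).trans (hC x)
  have hsum : |birkhoffSum f g n x| ≤ n * C :=
    calc |birkhoffSum f g n x| ≤ ∑ k ∈ Finset.range n, |g (f^[k] x)| :=
          Finset.abs_sum_le_sum_abs _ _
      _ ≤ ∑ _k ∈ Finset.range n, C := Finset.sum_le_sum fun k _ => hC _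
      _ = n * C := by simp
  rwa [birkhoffAverage, smul_eq_mul, abs_mul, abs_inv, Nat.abs_cast,
    inv_mul_le_iff₀ (by positivity)]

theorem isBoundedUnder_le_birkhoffAverage (hC : ∀ x, |g x| ≤ C) (x : α) :
    atTop.IsBoundedUnder (· ≤ ·) fun n => birkhoffAverage ℝ f g n x :=
  isBoundedUnder_of ⟨C, fun n => (abs_le.1 (abs_birkhoffAverage_le hC n x)).2⟩

theorem isBoundedUnder_ge_birkhoffAverage (hC : ∀ x, |g x| ≤ C) (x : α) :
    atTop.IsBoundedUnder (· ≥ ·) fun n => birkhoffAverage ℝ f g n x :=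
  isBoundedUnder_of ⟨-C, fun n => (abs_le.1 (abs_birkhoffAverage_le hC n x)).1⟩

theorem limsup_birkhoffAverage_apply (hC : ∀ x, |g x| ≤ C) (x : α) :
    limsup (fun n => birkhoffAverage ℝ f g n (f x)) atTop =
      limsup (fun n => birkhoffAverage ℝ f g n x) atTop := by
  have hg : Bornology.IsBounded (Set.range g) :=
    isBounded_iff_forall_norm_le.2 ⟨C, by rintro _ ⟨y, rfl⟩; exact hC y⟩
  have := limsup_add_eq_of_tendsto_zero (isBoundedUnder_le_birkhoffAverage (f := f) hC x)
    (isBoundedUnder_ge_birkhoffAverage hC x)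
    (tendsto_birkhoffAverage_apply_sub_birkhoffAverage' ℝ hg f x)
  simpa only [Pi.add_def, add_sub_cancel] using this

theorem exists_birkhoffSum_sub_pos_of_frequently_lt {c : ℝ} {x : α}
    (h : ∃ᶠ n in atTop, c < birkhoffAverage ℝ f g n x) :
    ∃ n, 0 < birkhoffSum f (fun y => g y - c) n x := by
  obtain ⟨n, hc, hn⟩ := (h.and_eventually (eventually_gt_atTop 0)).exists
  refine ⟨n, ?_⟩
  have hsum : birkhoffSum f (fun y => g y - c) n x = birkhoffSum f g n x - n * c := by
    simp [birkhoffSum, Finset.sum_sub_distrib]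
  rw [birkhoffAverage, smul_eq_mul, lt_inv_mul_iff₀ (by positivity)] at hc
  linarith

variable [MeasurableSpace α] {μ : Measure α} [IsProbabilityMeasure μ]

/-- The `limsup` of the averages is `f`-invariant, so `{c < limsup}` is null or conull, and the
maximal inequality for `g - c` excludes the latter. -/
theorem Ergodic.ae_limsup_birkhoffAverage_le (hf : Ergodic f μ) (hg : Measurable g)
    (hC : ∀ x, |g x| ≤ C) {c : ℝ} (hc : ∫ x, g x ∂μ < c) :
    ∀ᵐ x ∂μ, limsup (fun n => birkhoffAverage ℝ f g n x) atTop ≤ c := by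
  set L : α → ℝ := fun x => limsup (fun n => birkhoffAverage ℝ f g n x) atTop
  have hL : Measurable L :=
    Measurable.limsup fun n => measurable_birkhoffAverage hf.measurable hg n
  have hA : MeasurableSet {x | c < L x} := measurableSet_lt measurable_const hL
  have hinv : f ⁻¹' {x | c < L x} = {x | c < L x} := by
    ext x
    simp [L, limsup_birkhoffAverage_apply hC x]
  rcases hf.ae_empty_or_univ hA hinv with hnull | hfull
  · filter_upwards [measure_eq_zero_iff_ae_notMem.1 (ae_eq_empty.1 hnull)] with x hx
    exact not_lt.1 hx
  · have hpos : ∀ᵐ x ∂μ, ∃ n, 0 < birkhoffSum f (fun y => g y - c) n x := by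
      filter_upwards [eventuallyEq_univ.1 hfull] with x hx
      exact exists_birkhoffSum_sub_pos_of_frequently_lt <|
        frequently_lt_of_lt_limsup (isBoundedUnder_ge_birkhoffAverage hC x).isCoboundedUnder_le hx
    have hgi : Integrable g μ :=
      .of_bound hg.aestronglyMeasurable C (.of_forall fun x => (Real.norm_eq_abs _).trans_le (hC x))
    have := integral_nonneg_of_ae_exists_birkhoffSum_pos hf.toMeasurePreserving
      (hg.sub measurable_const) (hgi.sub (integrable_const c)) hpos
    rw [Pi.sub_def, integral_sub hgi (integrable_const c)] at this
    simp only [integral_const, probReal_univ, smul_eq_mul, one_mul, sub_nonneg] at this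
    linarith

theorem Ergodic.ae_eventually_birkhoffAverage_lt (hf : Ergodic f μ) (hg : Measurable g)
    (hC : ∀ x, |g x| ≤ C) :
    ∀ᵐ x ∂μ, ∀ c, ∫ x, g x ∂μ < c → ∀ᶠ n in atTop, birkhoffAverage ℝ f g n x < c := by
  have hq : ∀ᵐ x ∂μ, ∀ q : ℚ, ∫ x, g x ∂μ < q →
      limsup (fun n => birkhoffAverage ℝ f g n x) atTop ≤ q := by
    refine ae_all_iff.2 fun q => ?_
    by_cases h : ∫ x, g x ∂μ < q
    · filter_upwards [hf.ae_limsup_birkhoffAverage_le hg hC h] with x hx _ using hx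
    · exact .of_forall fun x h' => absurd h' h
  filter_upwards [hq] with x hx c hc
  obtain ⟨q, hgq, hqc⟩ := exists_rat_btwn hc
  exact eventually_lt_of_limsup_lt ((hx q hgq).trans_lt hqc)
    (isBoundedUnder_le_birkhoffAverage hC x)

theorem Ergodic.ae_tendsto_birkhoffAverage (hf : Ergodic f μ) (hg : Measurable g)
    (hC : ∀ x, |g x| ≤ C) :
    ∀ᵐ x ∂μ, Tendsto (fun n => birkhoffAverage ℝ f g n x) atTop (𝓝 (∫ x, g x ∂μ)) := by
  have hC' : ∀ x, |(-g) x| ≤ C := fun x => (abs_neg (g x)).trans_le (hC x)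
  filter_upwards [hf.ae_eventually_birkhoffAverage_lt hg hC,
    hf.ae_eventually_birkhoffAverage_lt hg.neg hC'] with x hupper hlower
  refine tendsto_order.2 ⟨fun a ha => ?_, hupper⟩
  have := hlower (-a) (by rw [Pi.neg_def, integral_neg]; exact neg_lt_neg ha)
  filter_upwards [this] with n hn
  simp only [birkhoffAverage_neg, Pi.neg_apply] at hn
  linarith

end PointwiseErgodic

section InnerRegular

variable {α : Type*} [TopologicalSpace α] [MeasurableSpace α] [OpensMeasurableSpace α]
  [T2Space α]

theorem IsSigmaCompact.measurableSet {s : Set α} (hs : IsSigmaCompact s) : MeasurableSet s := by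
  obtain ⟨K, hK, rfl⟩ := hs
  exact .iUnion fun n => (hK n).measurableSet

theorem exists_isSigmaCompact_subset_ae {μ : Measure α} [IsFiniteMeasure μ]
    [μ.InnerRegularCompactLTTop] {p : α → Prop} (hp : ∀ᵐ x ∂μ, p x) :
    ∃ K, IsSigmaCompact K ∧ (∀ x ∈ K, p x) ∧ ∀ᵐ x ∂μ, x ∈ K := by
  obtain ⟨s, hs_ae, hs, hsp⟩ := hp.exists_measurable_mem
  choose K hKs hK hμK using fun n : ℕ => hs.exists_isCompact_sdiff_lt (measure_ne_top μ s)
    (ENNReal.inv_ne_zero.2 (ENNReal.natCast_ne_top n))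
  refine ⟨⋃ n, K n, isSigmaCompact_iUnion_of_isCompact K hK,
    fun x hx => hsp x (Set.iUnion_subset hKs hx), ?_⟩
  have hnull : μ (s \ ⋃ n, K n) = 0 :=
    nonpos_iff_eq_zero.1 <| ge_of_tendsto' ENNReal.tendsto_inv_nat_nhds_zero fun n =>
      (measure_mono (Set.sdiff_subset_sdiff_right (Set.subset_iUnion K n))).trans (hμK n).le
  filter_upwards [hs_ae, measure_eq_zero_iff_ae_notMem.1 hnull] with x hxs hx
  by_contra hxK
  exact hx ⟨hxs, hxK⟩

end InnerRegular

theorem MeasureTheory.Measure.map_apply_image_eq_one {α β : Type*} [MeasurableSpace α]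
    [MeasurableSpace β] {ρ : Measure α} [IsProbabilityMeasure ρ] {φ : α → β} (hφ : Measurable φ)
    {K : Set α} (hK : ∀ᵐ x ∂ρ, x ∈ K) (hm : MeasurableSet (φ '' K)) : ρ.map φ (φ '' K) = 1 := by
  rw [Measure.map_apply hφ hm, ← prob_compl_eq_zero_iff (hφ hm), ← mem_ae_iff]
  exact mem_of_superset hK (Set.subset_preimage_image φ K)

theorem stmt15_general {X Y : Type*}
    [MetricSpace X] [CompactSpace X] [MeasurableSpace X] [BorelSpace X]
    [MetricSpace Y] [CompactSpace Y] [MeasurableSpace Y] [BorelSpace Y]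
    (T : X → X) (S : Y → Y)
    (F : X × Y → ℝ) (hF : Continuous F)
    (μ : Measure X) [IsProbabilityMeasure μ]
    (ν : Measure Y) [IsProbabilityMeasure ν]
    (lam : Measure (X × Y)) (hlam : IsJoining2 T S μ ν lam)
    (hlamerg : Ergodic (Prod.map T S) lam)
    (hopt : ∫ p, F p ∂lam = Fbar T S F μ ν)
    (X' : Set X) (Y' : Set Y) (hX' : MeasurableSet X') (hY' : MeasurableSet Y')
    (hX'full : μ X' = 1) (hY'full : ν Y' = 1) :
    ∃ X'' : Set X, ∃ Y'' : Set Y, X'' ⊆ X' ∧ Y'' ⊆ Y' ∧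
      MeasurableSet X'' ∧ MeasurableSet Y'' ∧ μ X'' = 1 ∧ ν Y'' = 1 ∧
      ∀ x ∈ X'', ∃ y ∈ Y'',
        Tendsto (fun n : ℕ => (n : ℝ)⁻¹ * ∑ j ∈ Finset.range n, F (T^[j] x, S^[j] y)) atTop
          (nhds (Fbar T S F μ ν)) := by
  obtain ⟨hprob, -, hμ, hν⟩ := hlam
  obtain ⟨C, hC⟩ := (isCompact_range hF.abs).bddAbove
  have hbirk := hlamerg.ae_tendsto_birkhoffAverage hF.measurable fun p => hC ⟨p, rfl⟩
  have hX'ae : ∀ᵐ p ∂lam, p.1 ∈ X' := ae_of_ae_map measurable_fst.aemeasurable <| by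
    rw [hμ]; exact mem_ae_iff.2 ((prob_compl_eq_zero_iff hX').2 hX'full)
  have hY'ae : ∀ᵐ p ∂lam, p.2 ∈ Y' := ae_of_ae_map measurable_snd.aemeasurable <| by
    rw [hν]; exact mem_ae_iff.2 ((prob_compl_eq_zero_iff hY').2 hY'full)
  obtain ⟨K, hK, hKgood, hK_ae⟩ := exists_isSigmaCompact_subset_ae (hbirk.and (hX'ae.and hY'ae))
  have hKX := (hK.image continuous_fst).measurableSet
  have hKY := (hK.image continuous_snd).measurableSet
  refine ⟨Prod.fst '' K, Prod.snd '' K, ?_, ?_, hKX, hKY,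
    hμ ▸ Measure.map_apply_image_eq_one measurable_fst hK_ae hKX,
    hν ▸ Measure.map_apply_image_eq_one measurable_snd hK_ae hKY, ?_⟩
  · rintro _ ⟨p, hp, rfl⟩
    exact (hKgood p hp).2.1
  · rintro _ ⟨p, hp, rfl⟩
    exact (hKgood p hp).2.2
  · rintro _ ⟨⟨x, y⟩, hp, rfl⟩
    refine ⟨y, Set.mem_image_of_mem _ hp, ?_⟩
    simpa [birkhoffAverage, birkhoffSum, Prod.map_iterate, hopt] using (hKgood _ hp).1

/-- for ergodic `μ`, `ν` and an ergodic joining `λ` achieving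
`F̄(μ,ν)`, and full-measure Borel sets `X'`, `Y'`, there are full-measure Borel
subsets `X'' ⊆ X'`, `Y'' ⊆ Y'` such that every point of `X''` is matched by a
point of `Y''` along which the averages of `F` converge to `F̄(μ,ν)`. -/
theorem stmt15 {X Y : Type*}
    [MetricSpace X] [CompactSpace X] [MeasurableSpace X] [BorelSpace X]
    [MetricSpace Y] [CompactSpace Y] [MeasurableSpace Y] [BorelSpace Y]
    (T : X → X) (hT : Continuous T) (S : Y → Y) (hS : Continuous S)
    (F : X × Y → ℝ) (hF : Continuous F)
    (μ : Measure X) [IsProbabilityMeasure μ] (hμerg : Ergodic T μ)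
    (ν : Measure Y) [IsProbabilityMeasure ν] (hνerg : Ergodic S ν)
    (lam : Measure (X × Y)) (hlam : IsJoining2 T S μ ν lam)
    (hlamerg : Ergodic (Prod.map T S) lam)
    (hopt : ∫ p, F p ∂lam = Fbar T S F μ ν)
    (X' : Set X) (Y' : Set Y) (hX' : MeasurableSet X') (hY' : MeasurableSet Y')
    (hX'full : μ X' = 1) (hY'full : ν Y' = 1) :
    ∃ X'' : Set X, ∃ Y'' : Set Y, X'' ⊆ X' ∧ Y'' ⊆ Y' ∧
      MeasurableSet X'' ∧ MeasurableSet Y'' ∧ μ X'' = 1 ∧ ν Y'' = 1 ∧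
      ∀ x ∈ X'', ∃ y ∈ Y'',
        Tendsto (fun n : ℕ => (n : ℝ)⁻¹ * ∑ j ∈ Finset.range n, F (T^[j] x, S^[j] y)) atTop
          (nhds (Fbar T S F μ ν)) :=
  stmt15_general T S F hF μ ν lam hlam hlamerg hopt X' Y' hX' hY' hX'full hY'full
end

section
/- Let A be a finite alphabet, σ the shift on A^ℤ, d₀(x,y) = 1 if x₀ ≠ y₀ and 0 otherwise, and let ρ be any metric on A^ℤ compatible with the product topology. Then Ornstein's metric d̄_M(μ,ν) = inf_{λ ∈ J(μ,ν)} ∫ d₀ dλ and the metric ρ̄(μ,ν) = inf_{λ ∈ J(μ,ν)} ∫ ρ dλ are uniformly equivalent on M_σ(A^ℤ). -/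
open MeasureTheory Filter

/-- The left shift on `A^ℤ`. -/
def shift {A : Type*} (x : ℤ → A) : ℤ → A := fun i => x (i + 1)

/-- A joining of two shift-invariant measures on `A^ℤ`. -/
def IsShiftJoining {A : Type*} [MeasurableSpace A] (μ ν : Measure (ℤ → A))
    (lam : Measure ((ℤ → A) × (ℤ → A))) : Prop :=
  IsProbabilityMeasure lam ∧ Measure.map (Prod.map shift shift) lam = lam ∧
    Measure.map Prod.fst lam = μ ∧ Measure.map Prod.snd lam = ν

/-- Infimum of the integral of a cost function over shift joinings. -/
noncomputable def costInf {A : Type*} [MeasurableSpace A]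
    (c : (ℤ → A) → (ℤ → A) → ℝ) (μ ν : Measure (ℤ → A)) : ℝ :=
  sInf {r : ℝ | ∃ lam, IsShiftJoining μ ν lam ∧ r = ∫ p, c p.1 p.2 ∂lam}

/-- The Hamming cost at coordinate `0`. -/
noncomputable def dZero {A : Type*} [DecidableEq A] (x y : ℤ → A) : ℝ :=
  if x 0 = y 0 then 0 else 1
/-!
A metric `ρ` compatible with the product topology on `A^ℤ` (`A` finite) is bounded and, up to an
error `ε`, depends only on the coordinates in a finite window `s`. Hence pointwise
`ε₀ · d₀ ≤ ρ ≤ ε + C · ∑_{i ∈ s} dᵢ`, where `dᵢ` is the Hamming cost at coordinate `i` and `ε₀`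
comes from `ρ`-closeness forcing agreement at coordinate `0`. Integrating against a shift-invariant
joining, every `dᵢ` has the same integral as `d₀`, so `∫ ρ` and `∫ d₀` control each other
uniformly in the joining, and taking infima over joinings gives the claim.
-/

section

variable {A : Type*}

/-- Uniform continuity of `ρ` for the product uniformity on `A^ℤ`. -/
def IsUniformlyLocal (ρ : (ℤ → A) → (ℤ → A) → ℝ) : Prop :=
  ∀ ε > 0, ∃ s : Finset ℤ, ∀ x y : ℤ → A, (∀ i ∈ s, x i = y i) → ρ x y < ε

lemma isUniformlyLocal_of_forall_abs_le {ρ : (ℤ → A) → (ℤ → A) → ℝ}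
    (h : ∀ ε > (0 : ℝ), ∃ N : ℕ, ∀ x y : ℤ → A, (∀ i : ℤ, |i| ≤ (N : ℤ) → x i = y i) → ρ x y < ε) :
    IsUniformlyLocal ρ := by
  intro ε hε
  obtain ⟨N, hN⟩ := h ε hε
  exact ⟨Finset.Icc (-(N : ℤ)) N, fun x y hxy =>
    hN x y fun i hi => hxy i (Finset.mem_Icc.2 (abs_le.1 hi))⟩

section Piecewise

variable (s : Finset ℤ) (z : ℤ → A)

def extendOutside (u : s → A) : ℤ → A := fun i => if h : i ∈ s then u ⟨i, h⟩ else z i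

lemma piecewise_eq_comp_restrict :
    (fun x : ℤ → A => s.piecewise x z) = extendOutside s z ∘ s.restrict := by
  ext x i
  by_cases h : i ∈ s <;> simp [extendOutside, h]

lemma finite_range_piecewise [Finite A] : (Set.range fun x : ℤ → A => s.piecewise x z).Finite := by
  rw [piecewise_eq_comp_restrict]
  exact (Set.finite_range _).subset (Set.range_comp_subset_range _ _)

lemma measurable_comp_piecewise [Finite A] [MeasurableSpace A] [MeasurableSingletonClass A]
    {β : Type*} [MeasurableSpace β] (g : (ℤ → A) → (ℤ → A) → β) :
    Measurable fun p : (ℤ → A) × (ℤ → A) => g (s.piecewise p.1 z) (s.piecewise p.2 z) := by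
  have key := congrFun (piecewise_eq_comp_restrict s z)
  simp only [key, Function.comp_apply]
  have hres : Measurable (s.restrict (π := fun _ => A)) := s.measurable_restrict
  exact (measurable_of_countable fun q : (s → A) × (s → A) =>
    g (extendOutside s z q.1) (extendOutside s z q.2)).comp (hres.prodMap hres)

end Piecewise

namespace IsUniformlyLocal

variable {ρ : (ℤ → A) → (ℤ → A) → ℝ}

lemma exists_piecewise_approx (hρ : IsUniformlyLocal ρ)
    (hρ_tri : ∀ x y z, ρ x z ≤ ρ x y + ρ y z) (z : ℤ → A) {ε : ℝ} (hε : 0 < ε) :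
    ∃ s : Finset ℤ, ∀ x y, |ρ x y - ρ (s.piecewise x z) (s.piecewise y z)| < ε := by
  obtain ⟨s, hs⟩ := hρ (ε / 2) (half_pos hε)
  have agree (x : ℤ → A) : ∀ i ∈ s, x i = s.piecewise x z i := fun i hi => by
    rw [s.piecewise_eq_of_mem _ _ hi]
  refine ⟨s, fun x y => abs_sub_lt_iff.2 ⟨?_, ?_⟩⟩
  · have := hs _ _ (agree x)
    have := hs _ _ fun i hi => (agree y i hi).symm
    linarith [hρ_tri x (s.piecewise x z) y, hρ_tri (s.piecewise x z) (s.piecewise y z) y]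
  · have := hs _ _ fun i hi => (agree x i hi).symm
    have := hs _ _ (agree y)
    linarith [hρ_tri (s.piecewise x z) x (s.piecewise y z), hρ_tri x y (s.piecewise y z)]

lemma exists_pos_bound [Finite A] (hρ : IsUniformlyLocal ρ)
    (hρ_tri : ∀ x y z, ρ x z ≤ ρ x y + ρ y z) : ∃ C > 0, ∀ x y, ρ x y ≤ C := by
  rcases isEmpty_or_nonempty (ℤ → A) with _ | ⟨⟨z⟩⟩
  · exact ⟨1, one_pos, isEmptyElim⟩
  obtain ⟨s, hs⟩ := hρ.exists_piecewise_approx hρ_tri z one_pos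
  obtain ⟨C, hC⟩ := ((finite_range_piecewise s z).image2 ρ (finite_range_piecewise s z)).bddAbove
  refine ⟨max C 0 + 1, by positivity, fun x y => ?_⟩
  have hle : ρ (s.piecewise x z) (s.piecewise y z) ≤ C :=
    hC (Set.mem_image2_of_mem (Set.mem_range_self x) (Set.mem_range_self y))
  linarith [(abs_sub_lt_iff.1 (hs x y)).1, le_max_left C 0]

lemma measurable_uncurry [Finite A] [MeasurableSpace A] [MeasurableSingletonClass A]
    (hρ : IsUniformlyLocal ρ) (hρ_tri : ∀ x y z, ρ x z ≤ ρ x y + ρ y z) :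
    Measurable fun p : (ℤ → A) × (ℤ → A) => ρ p.1 p.2 := by
  rcases isEmpty_or_nonempty (ℤ → A) with _ | ⟨⟨z⟩⟩
  · exact measurable_of_empty _
  choose s hs using fun n : ℕ =>
    hρ.exists_piecewise_approx hρ_tri z (Nat.one_div_pos_of_nat (n := n))
  refine measurable_of_tendsto_metrizable (fun n => measurable_comp_piecewise (s n) z ρ)
    (tendsto_pi_nhds.2 fun p => ?_)
  rw [tendsto_iff_norm_sub_tendsto_zero]
  refine squeeze_zero_norm (fun n => ?_) tendsto_one_div_add_atTop_nhds_zero_nat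
  rw [norm_norm, Real.norm_eq_abs, abs_sub_comm]
  exact (hs n p.1 p.2).le

lemma integrable_uncurry [Finite A] [MeasurableSpace A] [MeasurableSingletonClass A]
    (hρ : IsUniformlyLocal ρ) (hρ_nonneg : ∀ x y, 0 ≤ ρ x y)
    (hρ_tri : ∀ x y z, ρ x z ≤ ρ x y + ρ y z) (lam : Measure ((ℤ → A) × (ℤ → A)))
    [IsFiniteMeasure lam] : Integrable (fun p => ρ p.1 p.2) lam := by
  obtain ⟨C, -, hC⟩ := hρ.exists_pos_bound hρ_tri
  exact .of_bound (hρ.measurable_uncurry hρ_tri).aestronglyMeasurable C (.of_forall fun p => by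
    rw [Real.norm_of_nonneg (hρ_nonneg _ _)]; exact hC _ _)

end IsUniformlyLocal

section Hamming

variable [DecidableEq A]

/-- `hammingAt 0` unfolds to `dZero`. -/
noncomputable def hammingAt (i : ℤ) (x y : ℤ → A) : ℝ :=
  if x i = y i then 0 else 1

lemma hammingAt_nonneg (i : ℤ) (x y : ℤ → A) : 0 ≤ hammingAt i x y := by
  unfold hammingAt; split_ifs <;> norm_num

lemma hammingAt_le_one (i : ℤ) (x y : ℤ → A) : hammingAt i x y ≤ 1 := by
  unfold hammingAt; split_ifs <;> norm_num

lemma hammingAt_shift (i : ℤ) (x y : ℤ → A) :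
    hammingAt i (shift x) (shift y) = hammingAt (i + 1) x y := rfl

variable [MeasurableSpace A] [Finite A] [MeasurableSingletonClass A]

lemma measurable_hammingAt (i : ℤ) :
    Measurable fun p : (ℤ → A) × (ℤ → A) => hammingAt i p.1 p.2 :=
  Measurable.ite (measurableSet_eq_fun ((measurable_pi_apply i).comp measurable_fst)
    ((measurable_pi_apply i).comp measurable_snd)) measurable_const measurable_const

lemma integrable_hammingAt (i : ℤ) (lam : Measure ((ℤ → A) × (ℤ → A))) [IsFiniteMeasure lam] :
    Integrable (fun p => hammingAt i p.1 p.2) lam :=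
  .of_bound (measurable_hammingAt i).aestronglyMeasurable 1 (.of_forall fun p => by
    rw [Real.norm_of_nonneg (hammingAt_nonneg i _ _)]; exact hammingAt_le_one i _ _)

end Hamming

section Joinings

variable [MeasurableSpace A]

lemma measurable_shift : Measurable (shift (A := A)) :=
  measurable_pi_lambda _ fun i => measurable_pi_apply (i + 1)

lemma isShiftJoining_prod {μ ν : Measure (ℤ → A)} [IsProbabilityMeasure μ]
    [IsProbabilityMeasure ν] (hμ : Measure.map shift μ = μ) (hν : Measure.map shift ν = ν) :
    IsShiftJoining μ ν (μ.prod ν) := by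
  refine ⟨inferInstance, ?_, Measure.fst_prod, Measure.snd_prod⟩
  rw [← Measure.map_prod_map _ _ measurable_shift measurable_shift, hμ, hν]

namespace IsShiftJoining

variable [DecidableEq A] [Finite A] [MeasurableSingletonClass A]
  {μ ν : Measure (ℤ → A)} {lam : Measure ((ℤ → A) × (ℤ → A))}

lemma integral_hammingAt_add_one (h : IsShiftJoining μ ν lam) (i : ℤ) :
    ∫ p, hammingAt (i + 1) p.1 p.2 ∂lam = ∫ p, hammingAt i p.1 p.2 ∂lam := by
  have hT : Measurable (Prod.map (shift (A := A)) shift) :=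
    (measurable_shift (A := A)).prodMap (measurable_shift (A := A))
  conv_rhs => rw [← h.2.1]
  rw [integral_map hT.aemeasurable (measurable_hammingAt i).aestronglyMeasurable]
  simp only [Prod.map_fst, Prod.map_snd, hammingAt_shift]

lemma integral_hammingAt (h : IsShiftJoining μ ν lam) (i : ℤ) :
    ∫ p, hammingAt i p.1 p.2 ∂lam = ∫ p, dZero p.1 p.2 ∂lam := by
  induction i using Int.induction_on with
  | zero => rfl
  | succ i ih => rw [h.integral_hammingAt_add_one, ih]
  | pred i ih => rw [← ih, ← h.integral_hammingAt_add_one, sub_add_cancel]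

end IsShiftJoining

end Joinings

section CostBounds

variable [DecidableEq A] {ρ : (ℤ → A) → (ℤ → A) → ℝ}

lemma le_add_mul_sum_hammingAt {s : Finset ℤ} {ε C : ℝ} (hε : 0 ≤ ε)
    (hs : ∀ x y : ℤ → A, (∀ i ∈ s, x i = y i) → ρ x y < ε) (hC : ∀ x y, ρ x y ≤ C) (hC0 : 0 ≤ C)
    (x y : ℤ → A) : ρ x y ≤ ε + C * ∑ i ∈ s, hammingAt i x y := by
  have hsum : 0 ≤ ∑ i ∈ s, hammingAt i x y := Finset.sum_nonneg fun i _ => hammingAt_nonneg i x y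
  by_cases hxy : ∀ i ∈ s, x i = y i
  · linarith [hs x y hxy, mul_nonneg hC0 hsum]
  · obtain ⟨i, hi, hne⟩ := not_forall₂.1 hxy
    have hone : 1 ≤ ∑ i ∈ s, hammingAt i x y := by
      calc (1 : ℝ) = hammingAt i x y := by simp [hammingAt, hne]
        _ ≤ _ := Finset.single_le_sum (fun j _ => hammingAt_nonneg j x y) hi
    nlinarith [hC x y]

lemma mul_dZero_le (hρ_nonneg : ∀ x y, 0 ≤ ρ x y) {ε₀ : ℝ}
    (h : ∀ x y, ρ x y < ε₀ → x 0 = y 0) (x y : ℤ → A) : ε₀ * dZero x y ≤ ρ x y := by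
  unfold dZero
  split_ifs with hxy
  · simpa using hρ_nonneg x y
  · simpa using not_lt.1 (mt (h x y) hxy)

variable [MeasurableSpace A] [Finite A] [MeasurableSingletonClass A]
  {μ ν : Measure (ℤ → A)} {lam : Measure ((ℤ → A) × (ℤ → A))}

lemma IsShiftJoining.integral_le_add_mul_integral_dZero (h : IsShiftJoining μ ν lam)
    (hρ_nonneg : ∀ x y, 0 ≤ ρ x y) (s : Finset ℤ) {a C : ℝ}
    (hle : ∀ x y, ρ x y ≤ a + C * ∑ i ∈ s, hammingAt i x y) :
    ∫ p, ρ p.1 p.2 ∂lam ≤ a + C * s.card * ∫ p, dZero p.1 p.2 ∂lam := by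
  have := h.1
  have hsum : Integrable (fun p => ∑ i ∈ s, hammingAt i p.1 p.2) lam :=
    integrable_finsetSum s fun i _ => integrable_hammingAt i lam
  calc ∫ p, ρ p.1 p.2 ∂lam ≤ ∫ p, (a + C * ∑ i ∈ s, hammingAt i p.1 p.2) ∂lam :=
        integral_mono_of_nonneg (.of_forall fun p => hρ_nonneg _ _)
          ((integrable_const a).add (hsum.const_mul C)) (.of_forall fun p => hle _ _)
    _ = a + C * s.card * ∫ p, dZero p.1 p.2 ∂lam := by
        rw [integral_add (integrable_const a) (hsum.const_mul C), integral_const_mul,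
          integral_finsetSum s fun i _ => integrable_hammingAt i lam,
          Finset.sum_congr rfl fun i _ => h.integral_hammingAt i, Finset.sum_const,
          nsmul_eq_mul, integral_const, probReal_univ, one_smul, mul_assoc]

lemma mul_integral_dZero_le [IsFiniteMeasure lam] (hρ : Integrable (fun p => ρ p.1 p.2) lam)
    {ε₀ : ℝ} (hle : ∀ x y, ε₀ * dZero x y ≤ ρ x y) :
    ε₀ * ∫ p, dZero p.1 p.2 ∂lam ≤ ∫ p, ρ p.1 p.2 ∂lam := by
  rw [← integral_const_mul]
  exact integral_mono ((integrable_hammingAt 0 lam).const_mul ε₀) hρ fun p => hle _ _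

end CostBounds

section CostInf

variable [MeasurableSpace A] {μ ν : Measure (ℤ → A)} {c c' : (ℤ → A) → (ℤ → A) → ℝ}

lemma costInf_le_integral (hc : ∀ x y, 0 ≤ c x y) {lam : Measure ((ℤ → A) × (ℤ → A))}
    (h : IsShiftJoining μ ν lam) : costInf c μ ν ≤ ∫ p, c p.1 p.2 ∂lam := by
  refine csInf_le ⟨0, ?_⟩ ⟨lam, h, rfl⟩
  rintro _ ⟨lam, -, rfl⟩
  exact integral_nonneg fun p => hc _ _

lemma costInf_lt_of_forall_integral_lt (hc' : ∀ x y, 0 ≤ c' x y)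
    (hne : ∃ lam, IsShiftJoining μ ν lam) {δ ε : ℝ}
    (h : ∀ lam, IsShiftJoining μ ν lam →
      ∫ p, c p.1 p.2 ∂lam < δ → ∫ p, c' p.1 p.2 ∂lam < ε)
    (hδ : costInf c μ ν < δ) : costInf c' μ ν < ε := by
  obtain ⟨lam, hlam⟩ := hne
  obtain ⟨_, ⟨lam', hlam', rfl⟩, hlt⟩ := exists_lt_of_csInf_lt (by exact ⟨_, lam, hlam, rfl⟩) hδ
  exact (costInf_le_integral hc' hlam').trans_lt (h lam' hlam' hlt)

end CostInf

end

theorem stmt17_general {A : Type*} [Fintype A] [DecidableEq A]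
    [MeasurableSpace A] [MeasurableSingletonClass A]
    (ρ : (ℤ → A) → (ℤ → A) → ℝ)
    (hρ_nonneg : ∀ x y, 0 ≤ ρ x y)
    (hρ_tri : ∀ x y z, ρ x z ≤ ρ x y + ρ y z)
    (hcompat₁ : ∀ ε > (0 : ℝ), ∃ N : ℕ, ∀ x y : ℤ → A,
      (∀ i : ℤ, |i| ≤ (N : ℤ) → x i = y i) → ρ x y < ε)
    (hcompat₂ : ∀ N : ℕ, ∃ ε > (0 : ℝ), ∀ x y : ℤ → A,
      ρ x y < ε → ∀ i : ℤ, |i| ≤ (N : ℤ) → x i = y i) :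
    ∀ ε > (0 : ℝ), ∃ δ > (0 : ℝ), ∀ μ ν : Measure (ℤ → A),
      IsProbabilityMeasure μ → IsProbabilityMeasure ν →
      Measure.map shift μ = μ → Measure.map shift ν = ν →
      (costInf dZero μ ν < δ → costInf ρ μ ν < ε) ∧
      (costInf ρ μ ν < δ → costInf dZero μ ν < ε) := by
  intro ε hε
  have hρ := isUniformlyLocal_of_forall_abs_le hcompat₁
  obtain ⟨C, hC, hρC⟩ := hρ.exists_pos_bound hρ_tri
  obtain ⟨s, hs⟩ := hρ (ε / 2) (half_pos hε)
  obtain ⟨ε₀, hε₀, hρ₀⟩ := hcompat₂ 0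
  have hdρ := mul_dZero_le hρ_nonneg fun x y hxy => hρ₀ x y hxy 0 (by simp)
  set K : ℝ := C * s.card + 1
  have hK : 0 < K := by positivity
  refine ⟨min (ε / (2 * K)) (ε₀ * ε), by positivity, fun μ ν _ _ hμ hν => ?_⟩
  have hne : ∃ lam, IsShiftJoining μ ν lam := ⟨_, isShiftJoining_prod hμ hν⟩
  constructor
  · refine costInf_lt_of_forall_integral_lt hρ_nonneg hne fun lam hlam hd => ?_
    have hd0 : 0 ≤ ∫ p, dZero p.1 p.2 ∂lam := integral_nonneg fun p => hammingAt_nonneg 0 _ _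
    calc ∫ p, ρ p.1 p.2 ∂lam ≤ ε / 2 + C * s.card * ∫ p, dZero p.1 p.2 ∂lam :=
          hlam.integral_le_add_mul_integral_dZero hρ_nonneg s
            (le_add_mul_sum_hammingAt (half_pos hε).le hs hρC hC.le)
      _ ≤ ε / 2 + K * ∫ p, dZero p.1 p.2 ∂lam := by gcongr; linarith
      _ < ε / 2 + K * (ε / (2 * K)) := by gcongr; exact hd.trans_le (min_le_left _ _)
      _ = ε := by field_simp; ring
  · refine costInf_lt_of_forall_integral_lt (hammingAt_nonneg 0) hne fun lam hlam hρlam => ?_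
    have := hlam.1
    have := mul_integral_dZero_le (hρ.integrable_uncurry hρ_nonneg hρ_tri lam) hdρ
    exact lt_of_mul_lt_mul_left (this.trans_lt (hρlam.trans_le (min_le_right _ _))) hε₀.le

/-- Ornstein's metric `d̄_M = inf ∫ d₀` and `ρ̄ = inf ∫ ρ` (for any
metric `ρ` compatible with the product topology, expressed by `hcompat₁`,
`hcompat₂`) are uniformly equivalent on shift-invariant measures on `A^ℤ`. -/
theorem stmt17 {A : Type*} [Fintype A] [DecidableEq A]
    [MeasurableSpace A] [MeasurableSingletonClass A]
    (ρ : (ℤ → A) → (ℤ → A) → ℝ)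
    (hρ_nonneg : ∀ x y, 0 ≤ ρ x y)
    (hρ_eq : ∀ x y, ρ x y = 0 ↔ x = y)
    (hρ_symm : ∀ x y, ρ x y = ρ y x)
    (hρ_tri : ∀ x y z, ρ x z ≤ ρ x y + ρ y z)
    (hcompat₁ : ∀ ε > (0 : ℝ), ∃ N : ℕ, ∀ x y : ℤ → A,
      (∀ i : ℤ, |i| ≤ (N : ℤ) → x i = y i) → ρ x y < ε)
    (hcompat₂ : ∀ N : ℕ, ∃ ε > (0 : ℝ), ∀ x y : ℤ → A,
      ρ x y < ε → ∀ i : ℤ, |i| ≤ (N : ℤ) → x i = y i) :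
    ∀ ε > (0 : ℝ), ∃ δ > (0 : ℝ), ∀ μ ν : Measure (ℤ → A),
      IsProbabilityMeasure μ → IsProbabilityMeasure ν →
      Measure.map shift μ = μ → Measure.map shift ν = ν →
      (costInf dZero μ ν < δ → costInf ρ μ ν < ε) ∧
      (costInf ρ μ ν < δ → costInf dZero μ ν < ε) :=
  stmt17_general ρ hρ_nonneg hρ_tri hcompat₁ hcompat₂
end
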